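/- arXiv:2310.05609 — 5 statements merged into one kernel-verified Lean document; each statement's English description precedes it below -/
import Mathlib

section
/- Let G be a finite simple connected graph of order n ≥ 4 and size m. If G has k pairwise edge-disjoint perfect matchings M_1, …, M_k such that, setting M = M_1 ∪ … ∪ M_k, the graph G − M (obtained by deleting the edges in M) is a connected spanning subgraph of G, then χ'_L(G) ≤ m − kn/2 + k. -/
open SimpleGraph

/-- Distance from a vertex to an edge: the minimum of the distances to the two endpoints. -/
noncomputable def edgeDist {V : Type*} (G : SimpleGraph V) (v : V) (e : Sym2 V) : ℕ :=
  Sym2.lift ⟨fun x y => min (G.dist v x) (G.dist v y), fun _ _ => min_comm _ _⟩ e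

/-- Distance (in `ℕ∞`) from a vertex to the `i`-th color class of an edge coloring `c`
(it is `⊤` if the class is empty). -/
noncomputable def classDist {V : Type*} (G : SimpleGraph V) {k : ℕ} (c : Sym2 V → Fin k)
    (v : V) (i : Fin k) : ℕ∞ :=
  ⨅ e ∈ {e | e ∈ G.edgeSet ∧ c e = i}, (edgeDist G v e : ℕ∞)

/-- `c` is an edge-locating `k`-coloring of `G`: it is a proper edge coloring (distinct edges
sharing an endpoint get different colors), and distinct vertices have distinct edge color codes
`(d(v, C_1), …, d(v, C_k))`. -/
def IsEdgeLocatingColoring {V : Type*} (G : SimpleGraph V) {k : ℕ} (c : Sym2 V → Fin k) : Prop :=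
  (∀ e ∈ G.edgeSet, ∀ f ∈ G.edgeSet, e ≠ f → (∃ x, x ∈ e ∧ x ∈ f) → c e ≠ c f) ∧
  (∀ u v : V, u ≠ v → ∃ i, classDist G c u i ≠ classDist G c v i)

/-- The edge-locating chromatic number `χ'_L(G)`: the least `k` such that `G` admits an
edge-locating `k`-coloring. -/
noncomputable def edgeLocatingChromaticNumber {V : Type*} (G : SimpleGraph V) : ℕ :=
  sInf {k | ∃ c : Sym2 V → Fin k, IsEdgeLocatingColoring G c}

/-- The join `G + H` of two graphs: all edges of `G`, all edges of `H`, and all edges between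
a vertex of `G` and a vertex of `H`. -/
def graphJoin {α β : Type*} (G : SimpleGraph α) (H : SimpleGraph β) : SimpleGraph (α ⊕ β) :=
  SimpleGraph.fromRel (fun x y =>
    (∃ a b, x = Sum.inl a ∧ y = Sum.inl b ∧ G.Adj a b) ∨
    (∃ a b, x = Sum.inr a ∧ y = Sum.inr b ∧ H.Adj a b) ∨
    (∃ a b, x = Sum.inl a ∧ y = Sum.inr b))

/-- A set `M` of edges of `G` forming a matching: pairwise vertex-disjoint edges of `G`. -/
def IsMatchingSet {V : Type*} (G : SimpleGraph V) (M : Set (Sym2 V)) : Prop :=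
  M ⊆ G.edgeSet ∧ ∀ e ∈ M, ∀ f ∈ M, e ≠ f → ∀ x, x ∈ e → x ∉ f

/-!
Colour every edge of `G - M` with a colour of its own and all edges of `M_i` with one further
colour `i`; this is proper because each `M_i` is a matching. Two vertices `u ≠ v` are told apart
by an edge of `G - M` containing exactly one of them, which exists because `G - M` is connected
with at least three vertices: being alone in its colour class, that edge is at distance `0` from
one of `u, v` and at positive distance from the other. This uses `|E(G - M)| + k` colours, and
`|E(G - M)| = m - |M| ≤ m - kn/2` because each of the disjoint perfect matchings covers the `n`
vertices with edges of two endpoints each.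
-/

namespace SimpleGraph

variable {V : Type*}

theorem Connected.exists_mem_edgeSet_xor [Fintype V] {H : SimpleGraph V} (hH : H.Connected)
    (hV : 2 < Fintype.card V) {u v : V} (huv : u ≠ v) :
    ∃ e ∈ H.edgeSet, Xor (u ∈ e) (v ∈ e) := by
  classical
  have hpair : ({u, v} : Finset V).card < (Finset.univ : Finset V).card :=
    (Finset.card_le_two).trans_lt (by simpa using hV)
  obtain ⟨z, -, hz⟩ := Finset.exists_mem_notMem_of_card_lt_card hpair
  -- the first edge of a walk from `u` to a third vertex that leaves `{u, v}` separates `u` from `v`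
  obtain ⟨p⟩ := hH.preconnected u z
  obtain ⟨d, -, hd, hd'⟩ := p.exists_boundary_dart {u, v} (by simp) (by simpa using hz)
  refine ⟨d.edge, d.edge_mem, ?_⟩
  have hsnd : d.snd ≠ u ∧ d.snd ≠ v := by simpa [not_or] using hd'
  rw [Dart.edge, Sym2.mk, Sym2.mem_iff, Sym2.mem_iff, xor_iff_not_iff]
  grind

theorem edgeDist_eq_zero_iff {G : SimpleGraph V} (hG : G.Preconnected) {v : V} {e : Sym2 V} :
    edgeDist G v e = 0 ↔ v ∈ e := by
  induction e using Sym2.ind with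
  | _ x y => simp [edgeDist, (hG v x).dist_eq_zero_iff, (hG v y).dist_eq_zero_iff]

theorem classDist_eq_edgeDist {G : SimpleGraph V} {k : ℕ} {c : Sym2 V → Fin k} {e : Sym2 V}
    (he : e ∈ G.edgeSet) (huniq : ∀ f ∈ G.edgeSet, c f = c e → f = e) (v : V) :
    classDist G c v (c e) = edgeDist G v e := by
  have hclass : {f | f ∈ G.edgeSet ∧ c f = c e} = {e} :=
    Set.eq_singleton_iff_unique_mem.2 ⟨⟨he, rfl⟩, fun f hf => huniq f hf.1 hf.2⟩
  rw [classDist, hclass, iInf_singleton]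

theorem classDist_ne_of_xor {G : SimpleGraph V} (hG : G.Preconnected) {k : ℕ}
    {c : Sym2 V → Fin k} {e : Sym2 V} (he : e ∈ G.edgeSet)
    (huniq : ∀ f ∈ G.edgeSet, c f = c e → f = e) {u v : V} (huv : Xor (u ∈ e) (v ∈ e)) :
    classDist G c u (c e) ≠ classDist G c v (c e) := by
  rw [classDist_eq_edgeDist he huniq, classDist_eq_edgeDist he huniq, ne_eq, Nat.cast_inj]
  intro h
  have hu := edgeDist_eq_zero_iff hG (v := u) (e := e)
  have hv := edgeDist_eq_zero_iff hG (v := v) (e := e)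
  rw [h] at hu
  exact (xor_iff_not_iff _ _).mp huv (hu.symm.trans hv)

theorem exists_classDist_ne_of_connected [Fintype V] {G H : SimpleGraph V} (hH : H.Connected)
    (hHG : H ≤ G) (hV : 2 < Fintype.card V) {k : ℕ} {c : Sym2 V → Fin k}
    (huniq : ∀ e ∈ H.edgeSet, ∀ f ∈ G.edgeSet, c f = c e → f = e) :
    ∀ u v, u ≠ v → ∃ i, classDist G c u i ≠ classDist G c v i := by
  intro u v huv
  obtain ⟨e, he, hxor⟩ := hH.exists_mem_edgeSet_xor hV huv
  exact ⟨c e, classDist_ne_of_xor (hH.preconnected.mono hHG) (edgeSet_mono hHG he)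
    (huniq e he) hxor⟩

theorem card_le_two_mul_ncard_of_forall_exists_mem [Fintype V] {M : Set (Sym2 V)}
    (hM : ∀ v, ∃ e ∈ M, v ∈ e) : Fintype.card V ≤ 2 * M.ncard := by
  classical
  have hcover : (Finset.univ : Finset V) ⊆ M.toFinset.biUnion Sym2.toFinset := by
    intro v _
    obtain ⟨e, he, hv⟩ := hM v
    exact Finset.mem_biUnion.2 ⟨e, Set.mem_toFinset.2 he, Sym2.mem_toFinset.2 hv⟩
  calc Fintype.card V ≤ (M.toFinset.biUnion Sym2.toFinset).card := Finset.card_le_card hcover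
    _ ≤ M.toFinset.card * 2 :=
      Finset.card_biUnion_le_card_mul _ _ _ fun e _ => by
        rw [Sym2.card_toFinset]; split_ifs <;> norm_num
    _ = 2 * M.ncard := by rw [Set.ncard_eq_toFinset_card', mul_comm]

theorem card_mul_card_le_two_mul_ncard_iUnion [Fintype V] {ι : Type*} [Fintype ι]
    {M : ι → Set (Sym2 V)} (hM : ∀ i v, ∃ e ∈ M i, v ∈ e)
    (hdisj : Pairwise (Function.onFun Disjoint M)) :
    Fintype.card ι * Fintype.card V ≤ 2 * (⋃ i, M i).ncard := by
  rw [Set.ncard_iUnion_of_finite (fun i => Set.toFinite _) hdisj, finsum_eq_sum_of_fintype,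
    Finset.mul_sum, ← smul_eq_mul, ← Finset.card_univ, ← Finset.sum_const]
  exact Finset.sum_le_sum fun i _ => card_le_two_mul_ncard_of_forall_exists_mem (hM i)

theorem edgeLocatingChromaticNumber_le_ncard_sdiff_add [Fintype V] {G : SimpleGraph V} {k : ℕ}
    {M : Fin k → Set (Sym2 V)} (hmatch : ∀ i, IsMatchingSet G (M i))
    (hconn : (G.deleteEdges (⋃ i, M i)).Connected) (hV : 2 < Fintype.card V) :
    edgeLocatingChromaticNumber G ≤ (G.edgeSet \ ⋃ i, M i).ncard + k := by
  classical
  set U := ⋃ i, M i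
  set S := G.edgeSet \ U
  have hS : (G.deleteEdges U).edgeSet = S := edgeSet_deleteEdges U
  obtain ⟨e₀, he₀⟩ : S.Nonempty := by
    obtain ⟨u, v, huv⟩ := Fintype.exists_pair_of_one_lt_card (by omega : 1 < Fintype.card V)
    obtain ⟨e, he, -⟩ := hconn.exists_mem_edgeSet_xor hV huv
    exact ⟨e, hS ▸ he⟩
  let σ : S ≃ Fin S.ncard := Finite.equivFin S
  -- `e₀` only makes the colours inhabited: the colour of a non-edge is irrelevant
  let d : Sym2 V → Fin S.ncard ⊕ Fin k := fun e =>
    if h : ∃ i, e ∈ M i then .inr h.choose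
    else .inl (σ (if h : e ∈ S then ⟨e, h⟩ else ⟨e₀, he₀⟩))
  let c : Sym2 V → Fin (S.ncard + k) := finSumFinEquiv ∘ d
  have hdS : ∀ e (he : e ∈ S), d e = .inl (σ ⟨e, he⟩) := fun e he => by
    simp only [d, dif_neg (Set.mem_iUnion.not.1 he.2), dif_pos he]
  have hdU : ∀ e ∈ U, ∃ i, e ∈ M i ∧ d e = .inr i := fun e he =>
    have h : ∃ i, e ∈ M i := Set.mem_iUnion.1 he
    ⟨h.choose, h.choose_spec, dif_pos h⟩
  have hedge : ∀ e ∈ G.edgeSet, e ∉ S → e ∈ U := fun e he heS =>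
    by_contra fun h => heS ⟨he, h⟩
  have huniq : ∀ e ∈ S, ∀ f ∈ G.edgeSet, c f = c e → f = e := by
    intro e he f hf hcf
    replace hcf : d f = .inl (σ ⟨e, he⟩) := (hdS e he) ▸ finSumFinEquiv.injective hcf
    by_cases hfS : f ∈ S
    · rw [hdS f hfS, Sum.inl.injEq, σ.apply_eq_iff_eq] at hcf
      exact congrArg Subtype.val hcf
    · obtain ⟨i, -, hi⟩ := hdU f (hedge f hf hfS)
      exact (Sum.inr_ne_inl (hi.symm.trans hcf)).elim
  have hproper :
      ∀ e ∈ G.edgeSet, ∀ f ∈ G.edgeSet, e ≠ f → (∃ x, x ∈ e ∧ x ∈ f) → c e ≠ c f := by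
    intro e he f hf hef ⟨x, hxe, hxf⟩ hcef
    by_cases heS : e ∈ S
    · exact hef (huniq e heS f hf hcef.symm).symm
    by_cases hfS : f ∈ S
    · exact hef (huniq f hfS e he hcef)
    obtain ⟨i, hei, hi⟩ := hdU e (hedge e he heS)
    obtain ⟨j, hfj, hj⟩ := hdU f (hedge f hf hfS)
    have hij : i = j :=
      Sum.inr_injective (hi.symm.trans ((finSumFinEquiv.injective hcef).trans hj))
    exact (hmatch i).2 e hei f (hij ▸ hfj) hef x hxe hxf
  exact Nat.sInf_le ⟨c, hproper, exists_classDist_ne_of_connected hconn (deleteEdges_le U) hV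
    fun e he => huniq e (hS ▸ he)⟩

end SimpleGraph

theorem stmt_13_general {V : Type*} [Fintype V] (G : SimpleGraph V)
    (n m k : ℕ) (hn : n = Fintype.card V) (hn4 : 4 ≤ n) (hm : m = G.edgeSet.ncard)
    (M : Fin k → Set (Sym2 V))
    (hmatch : ∀ i, IsMatchingSet G (M i))
    (hperf : ∀ i, ∀ v : V, ∃ e ∈ M i, v ∈ e)
    (hdisj : ∀ i j, i ≠ j → Disjoint (M i) (M j))
    (hconn : (G.deleteEdges (⋃ i, M i)).Connected) :
    edgeLocatingChromaticNumber G ≤ m - k * n / 2 + k := by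
  have hU : (⋃ i, M i) ⊆ G.edgeSet := Set.iUnion_subset fun i => (hmatch i).1
  have hχ := edgeLocatingChromaticNumber_le_ncard_sdiff_add hmatch hconn (by omega)
  have hcount := card_mul_card_le_two_mul_ncard_iUnion hperf hdisj
  rw [Set.ncard_sdiff hU] at hχ
  have hUm := Set.ncard_le_ncard hU
  rw [Fintype.card_fin] at hcount
  subst hn hm
  omega

/-- If a finite simple connected graph `G` of order `n ≥ 4` and size `m` has `k` pairwise
edge-disjoint perfect matchings `M_1, …, M_k` whose removal leaves a connected spanning
subgraph, then `χ'_L(G) ≤ m - kn/2 + k`. -/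
theorem stmt_13 {V : Type*} [Fintype V] (G : SimpleGraph V) (hG : G.Connected)
    (n m k : ℕ) (hn : n = Fintype.card V) (hn4 : 4 ≤ n) (hm : m = G.edgeSet.ncard)
    (M : Fin k → Set (Sym2 V))
    (hmatch : ∀ i, IsMatchingSet G (M i))
    (hperf : ∀ i, ∀ v : V, ∃ e ∈ M i, v ∈ e)
    (hdisj : ∀ i j, i ≠ j → Disjoint (M i) (M j))
    (hconn : (G.deleteEdges (⋃ i, M i)).Connected) :
    edgeLocatingChromaticNumber G ≤ m - k * n / 2 + k :=
  stmt_13_general G n m k hn hn4 hm M hmatch hperf hdisj hconn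
end

section
/- The edge-locating chromatic number is not monotonic: there exist finite simple connected graphs G and H such that G is a proper subgraph of H and χ'_L(H) < χ'_L(G). -/
open SimpleGraph

section Aux

lemma classDist_le {V : Type*} (G : SimpleGraph V) {k : ℕ} (c : Sym2 V → Fin k) (v : V)
    {i : Fin k} {e : Sym2 V} (he : e ∈ G.edgeSet) (hc : c e = i) :
    classDist G c v i ≤ (edgeDist G v e : ℕ∞) :=
  iInf₂_le e ⟨he, hc⟩

lemma le_classDist {V : Type*} {G : SimpleGraph V} {k : ℕ} {c : Sym2 V → Fin k} {v : V}
    {i : Fin k} {n : ℕ∞} (h : ∀ e ∈ G.edgeSet, c e = i → n ≤ (edgeDist G v e : ℕ∞)) :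
    n ≤ classDist G c v i :=
  le_iInf₂ fun e he => h e he.1 he.2

lemma edgeDist_mk {V : Type*} (G : SimpleGraph V) (v x y : V) :
    edgeDist G v s(x, y) = min (G.dist v x) (G.dist v y) := rfl

lemma edgeDist_eq_zero {V : Type*} (G : SimpleGraph V) {v : V} {e : Sym2 V} (h : v ∈ e) :
    edgeDist G v e = 0 := by
  induction e using Sym2.ind with
  | _ x y =>
    rw [Sym2.mem_iff] at h
    rcases h with rfl | rfl <;> simp [edgeDist_mk, SimpleGraph.dist_self]

lemma one_le_edgeDist {V : Type*} {G : SimpleGraph V} (hc : G.Connected) {v : V} {e : Sym2 V}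
    (h : v ∉ e) : 1 ≤ edgeDist G v e := by
  induction e using Sym2.ind with
  | _ x y =>
    rw [Sym2.mem_iff] at h
    push_neg at h
    rw [edgeDist_mk, le_min_iff]
    exact ⟨hc.pos_dist_of_ne h.1, hc.pos_dist_of_ne h.2⟩

lemma edgeDist_le_one {V : Type*} {G : SimpleGraph V} {v x y : V} (h : G.Adj v x) :
    edgeDist G v s(x, y) ≤ 1 := by
  rw [edgeDist_mk]
  exact le_trans (min_le_left _ _) (by simpa using G.dist_le h.toWalk)

lemma classDist_eq_zero {V : Type*} {G : SimpleGraph V} {k : ℕ} {c : Sym2 V → Fin k} {v : V}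
    {i : Fin k} (h : ∃ e, e ∈ G.edgeSet ∧ c e = i ∧ v ∈ e) :
    classDist G c v i = 0 := by
  obtain ⟨e, he, hce, hve⟩ := h
  refine le_antisymm (le_trans (classDist_le G c v he hce) ?_) (zero_le)
  simp [edgeDist_eq_zero G hve]

lemma one_le_classDist {V : Type*} {G : SimpleGraph V} (hc : G.Connected) {k : ℕ}
    {c : Sym2 V → Fin k} {v : V} {i : Fin k} (h : ∀ e ∈ G.edgeSet, c e = i → v ∉ e) :
    1 ≤ classDist G c v i :=
  le_classDist fun e he hce => by exact_mod_cast one_le_edgeDist hc (h e he hce)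

lemma classDist_eq_one {V : Type*} {G : SimpleGraph V} (hc : G.Connected) {k : ℕ}
    {c : Sym2 V → Fin k} {v : V} {i : Fin k}
    (h0 : ∀ e ∈ G.edgeSet, c e = i → v ∉ e)
    (h1 : ∃ e, e ∈ G.edgeSet ∧ c e = i ∧ edgeDist G v e ≤ 1) :
    classDist G c v i = 1 := by
  obtain ⟨e, he, hce, hde⟩ := h1
  refine le_antisymm (le_trans (classDist_le G c v he hce) ?_) (one_le_classDist hc h0)
  exact_mod_cast hde

lemma distinguish {V : Type*} {G : SimpleGraph V} (hc : G.Connected) {k : ℕ}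
    (c : Sym2 V → Fin k) {u v : V} (i : Fin k) (e : Sym2 V) (he : e ∈ G.edgeSet)
    (hce : c e = i) (hue : u ∈ e) (hv : ∀ f ∈ G.edgeSet, c f = i → v ∉ f) :
    classDist G c u i ≠ classDist G c v i := by
  have h1 : classDist G c u i = 0 := classDist_eq_zero ⟨e, he, hce, hue⟩
  have h2 : 1 ≤ classDist G c v i := one_le_classDist hc hv
  rw [h1]
  intro h
  rw [← h] at h2
  simp at h2

/-! ### The concrete graphs -/

def gAdj : Fin 5 → Fin 5 → Bool := fun x y =>
  (x, y) ∈ [((0:Fin 5),(1:Fin 5)), (1,0), (0,2), (2,0), (0,3), (3,0), (0,4), (4,0), (1,4), (4,1),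
    (2,3), (3,2)]

def hAdj : Fin 5 → Fin 5 → Bool := fun x y => gAdj x y || (x, y) ∈ [((1:Fin 5),(2:Fin 5)), (2,1)]

def Gr : SimpleGraph (Fin 5) where
  Adj x y := gAdj x y
  symm := ⟨fun x y h => by revert h; revert y; revert x; decide⟩
  loopless := ⟨fun x h => by revert h; revert x; decide⟩

def Hr : SimpleGraph (Fin 5) where
  Adj x y := hAdj x y
  symm := ⟨fun x y h => by revert h; revert y; revert x; decide⟩
  loopless := ⟨fun x h => by revert h; revert x; decide⟩

instance : DecidableRel Gr.Adj := fun x y => inferInstanceAs (Decidable (gAdj x y = true))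
instance : DecidableRel Hr.Adj := fun x y => inferInstanceAs (Decidable (hAdj x y = true))

def fG : Fin 5 → Fin 5 → Fin 5
  | 0, 1 => 0 | 0, 2 => 1 | 0, 3 => 2 | 0, 4 => 3 | 1, 4 => 4 | 2, 3 => 4 | _, _ => 0

def cG : Sym2 (Fin 5) → Fin 5 :=
  Sym2.lift ⟨fun x y => fG (min x y) (max x y),
    fun x y => by simp only []; rw [min_comm, max_comm]⟩

def fH : Fin 5 → Fin 5 → Fin 4
  | 0, 1 => 0 | 0, 2 => 1 | 0, 3 => 2 | 0, 4 => 3 | 1, 2 => 3 | 1, 4 => 2 | 2, 3 => 0 | _, _ => 0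

def cH : Sym2 (Fin 5) → Fin 4 :=
  Sym2.lift ⟨fun x y => fH (min x y) (max x y),
    fun x y => by simp only []; rw [min_comm, max_comm]⟩

lemma hGconn : Gr.Connected := by
  rw [SimpleGraph.connected_iff]
  refine ⟨?_, ⟨0⟩⟩
  have h0 : ∀ v : Fin 5, v ≠ 0 → Gr.Adj 0 v := by decide
  intro u v
  rcases eq_or_ne u 0 with rfl | hu
  · rcases eq_or_ne v 0 with rfl | hv
    · exact SimpleGraph.Reachable.refl _
    · exact (h0 v hv).reachable
  · rcases eq_or_ne v 0 with rfl | hv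
    · exact (h0 u hu).symm.reachable
    · exact ((h0 u hu).symm.reachable).trans (h0 v hv).reachable

lemma hGH : Gr ≤ Hr := by
  intro x y h
  revert h; revert y; revert x
  decide

lemma hHconn : Hr.Connected := hGconn.mono hGH

lemma hGedges : ∀ e ∈ Gr.edgeSet,
    e = s(0,1) ∨ e = s(0,2) ∨ e = s(0,3) ∨ e = s(0,4) ∨ e = s(1,4) ∨ e = s(2,3) := by decide

/-! ### Upper bound for `G`: the coloring `cG` with 5 colors is edge-locating -/

lemma cG_locating : IsEdgeLocatingColoring Gr cG := by
  constructor
  · decide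
  · intro u v huv
    fin_cases u <;> fin_cases v
    · exact absurd rfl huv
    · exact ⟨1, distinguish hGconn cG (1 : _) (s(0,2)) (by decide) (by decide) (by decide) (by decide)⟩
    · exact ⟨0, distinguish hGconn cG (0 : _) (s(0,1)) (by decide) (by decide) (by decide) (by decide)⟩
    · exact ⟨0, distinguish hGconn cG (0 : _) (s(0,1)) (by decide) (by decide) (by decide) (by decide)⟩
    · exact ⟨0, distinguish hGconn cG (0 : _) (s(0,1)) (by decide) (by decide) (by decide) (by decide)⟩
    · exact ⟨1, Ne.symm (distinguish hGconn cG (1 : _) (s(0,2)) (by decide) (by decide) (by decide) (by decide))⟩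
    · exact absurd rfl huv
    · exact ⟨0, distinguish hGconn cG (0 : _) (s(0,1)) (by decide) (by decide) (by decide) (by decide)⟩
    · exact ⟨0, distinguish hGconn cG (0 : _) (s(0,1)) (by decide) (by decide) (by decide) (by decide)⟩
    · exact ⟨0, distinguish hGconn cG (0 : _) (s(0,1)) (by decide) (by decide) (by decide) (by decide)⟩
    · exact ⟨0, Ne.symm (distinguish hGconn cG (0 : _) (s(0,1)) (by decide) (by decide) (by decide) (by decide))⟩
    · exact ⟨0, Ne.symm (distinguish hGconn cG (0 : _) (s(0,1)) (by decide) (by decide) (by decide) (by decide))⟩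
    · exact absurd rfl huv
    · exact ⟨1, distinguish hGconn cG (1 : _) (s(0,2)) (by decide) (by decide) (by decide) (by decide)⟩
    · exact ⟨1, distinguish hGconn cG (1 : _) (s(0,2)) (by decide) (by decide) (by decide) (by decide)⟩
    · exact ⟨0, Ne.symm (distinguish hGconn cG (0 : _) (s(0,1)) (by decide) (by decide) (by decide) (by decide))⟩
    · exact ⟨0, Ne.symm (distinguish hGconn cG (0 : _) (s(0,1)) (by decide) (by decide) (by decide) (by decide))⟩
    · exact ⟨1, Ne.symm (distinguish hGconn cG (1 : _) (s(0,2)) (by decide) (by decide) (by decide) (by decide))⟩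
    · exact absurd rfl huv
    · exact ⟨2, distinguish hGconn cG (2 : _) (s(0,3)) (by decide) (by decide) (by decide) (by decide)⟩
    · exact ⟨0, Ne.symm (distinguish hGconn cG (0 : _) (s(0,1)) (by decide) (by decide) (by decide) (by decide))⟩
    · exact ⟨0, Ne.symm (distinguish hGconn cG (0 : _) (s(0,1)) (by decide) (by decide) (by decide) (by decide))⟩
    · exact ⟨1, Ne.symm (distinguish hGconn cG (1 : _) (s(0,2)) (by decide) (by decide) (by decide) (by decide))⟩
    · exact ⟨2, Ne.symm (distinguish hGconn cG (2 : _) (s(0,3)) (by decide) (by decide) (by decide) (by decide))⟩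
    · exact absurd rfl huv

/-! ### Upper bound for `H`: the coloring `cH` with 4 colors is edge-locating -/

lemma cH_locating : IsEdgeLocatingColoring Hr cH := by
  constructor
  · decide
  · intro u v huv
    fin_cases u <;> fin_cases v
    · exact absurd rfl huv
    · exact ⟨1, distinguish hHconn cH (1 : _) (s(0,2)) (by decide) (by decide) (by decide) (by decide)⟩
    · exact ⟨2, distinguish hHconn cH (2 : _) (s(0,3)) (by decide) (by decide) (by decide) (by decide)⟩
    · exact ⟨1, distinguish hHconn cH (1 : _) (s(0,2)) (by decide) (by decide) (by decide) (by decide)⟩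
    · exact ⟨0, distinguish hHconn cH (0 : _) (s(0,1)) (by decide) (by decide) (by decide) (by decide)⟩
    · exact ⟨1, Ne.symm (distinguish hHconn cH (1 : _) (s(0,2)) (by decide) (by decide) (by decide) (by decide))⟩
    · exact absurd rfl huv
    · exact ⟨1, Ne.symm (distinguish hHconn cH (1 : _) (s(0,2)) (by decide) (by decide) (by decide) (by decide))⟩
    · exact ⟨3, distinguish hHconn cH (3 : _) (s(1,2)) (by decide) (by decide) (by decide) (by decide)⟩
    · exact ⟨0, distinguish hHconn cH (0 : _) (s(0,1)) (by decide) (by decide) (by decide) (by decide)⟩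
    · exact ⟨2, Ne.symm (distinguish hHconn cH (2 : _) (s(0,3)) (by decide) (by decide) (by decide) (by decide))⟩
    · exact ⟨1, distinguish hHconn cH (1 : _) (s(0,2)) (by decide) (by decide) (by decide) (by decide)⟩
    · exact absurd rfl huv
    · exact ⟨1, distinguish hHconn cH (1 : _) (s(0,2)) (by decide) (by decide) (by decide) (by decide)⟩
    · exact ⟨0, distinguish hHconn cH (0 : _) (s(2,3)) (by decide) (by decide) (by decide) (by decide)⟩
    · exact ⟨1, Ne.symm (distinguish hHconn cH (1 : _) (s(0,2)) (by decide) (by decide) (by decide) (by decide))⟩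
    · exact ⟨3, Ne.symm (distinguish hHconn cH (3 : _) (s(1,2)) (by decide) (by decide) (by decide) (by decide))⟩
    · exact ⟨1, Ne.symm (distinguish hHconn cH (1 : _) (s(0,2)) (by decide) (by decide) (by decide) (by decide))⟩
    · exact absurd rfl huv
    · exact ⟨0, distinguish hHconn cH (0 : _) (s(2,3)) (by decide) (by decide) (by decide) (by decide)⟩
    · exact ⟨0, Ne.symm (distinguish hHconn cH (0 : _) (s(0,1)) (by decide) (by decide) (by decide) (by decide))⟩
    · exact ⟨0, Ne.symm (distinguish hHconn cH (0 : _) (s(0,1)) (by decide) (by decide) (by decide) (by decide))⟩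
    · exact ⟨0, Ne.symm (distinguish hHconn cH (0 : _) (s(2,3)) (by decide) (by decide) (by decide) (by decide))⟩
    · exact ⟨0, Ne.symm (distinguish hHconn cH (0 : _) (s(2,3)) (by decide) (by decide) (by decide) (by decide))⟩
    · exact absurd rfl huv

/-! ### Lower bound for `G`: no edge-locating coloring with fewer than 5 colors -/

lemma G_lower : ∀ k : ℕ, (∃ c : Sym2 (Fin 5) → Fin k, IsEdgeLocatingColoring Gr c) → 5 ≤ k := by
  intro k ⟨c, hprop, hloc⟩
  by_contra hklt
  push_neg at hklt
  have hGc := hGconn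
  -- the four edges at the center get pairwise distinct colors
  have hab : c s(0,1) ≠ c s(0,2) :=
    hprop _ (by decide) _ (by decide) (by decide) ⟨0, by decide, by decide⟩
  have hap : c s(0,1) ≠ c s(0,3) :=
    hprop _ (by decide) _ (by decide) (by decide) ⟨0, by decide, by decide⟩
  have haq : c s(0,1) ≠ c s(0,4) :=
    hprop _ (by decide) _ (by decide) (by decide) ⟨0, by decide, by decide⟩
  have hbp : c s(0,2) ≠ c s(0,3) :=
    hprop _ (by decide) _ (by decide) (by decide) ⟨0, by decide, by decide⟩
  have hbq : c s(0,2) ≠ c s(0,4) :=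
    hprop _ (by decide) _ (by decide) (by decide) ⟨0, by decide, by decide⟩
  have hpq : c s(0,3) ≠ c s(0,4) :=
    hprop _ (by decide) _ (by decide) (by decide) ⟨0, by decide, by decide⟩
  have hra : c s(1,4) ≠ c s(0,1) :=
    hprop _ (by decide) _ (by decide) (by decide) ⟨1, by decide, by decide⟩
  have hrq : c s(1,4) ≠ c s(0,4) :=
    hprop _ (by decide) _ (by decide) (by decide) ⟨4, by decide, by decide⟩
  have hsb : c s(2,3) ≠ c s(0,2) :=
    hprop _ (by decide) _ (by decide) (by decide) ⟨2, by decide, by decide⟩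
  have hsp : c s(2,3) ≠ c s(0,3) :=
    hprop _ (by decide) _ (by decide) (by decide) ⟨3, by decide, by decide⟩
  have hc4 : ({c s(0,1), c s(0,2), c s(0,3), c s(0,4)} : Finset (Fin k)).card = 4 := by
    rw [Finset.card_insert_of_notMem (by simp [hab, hap, haq]),
      Finset.card_insert_of_notMem (by simp [hbp, hbq]),
      Finset.card_insert_of_notMem (by simp [hpq]), Finset.card_singleton]
  have hk4 : 4 ≤ k := by
    calc 4 = ({c s(0,1), c s(0,2), c s(0,3), c s(0,4)} : Finset (Fin k)).card := hc4.symm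
    _ ≤ (Finset.univ : Finset (Fin k)).card := Finset.card_le_univ _
    _ = k := by simp
  have hkeq : k = 4 := by omega
  subst hkeq
  -- every color is one of the four star colors
  have huniv : ∀ i : Fin 4,
      i = c s(0,1) ∨ i = c s(0,2) ∨ i = c s(0,3) ∨ i = c s(0,4) := by
    intro i
    have he : ({c s(0,1), c s(0,2), c s(0,3), c s(0,4)} : Finset (Fin 4)) = Finset.univ :=
      Finset.eq_univ_of_card _ (by simp [hc4])
    have hi : i ∈ ({c s(0,1), c s(0,2), c s(0,3), c s(0,4)} : Finset (Fin 4)) := by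
      rw [he]; exact Finset.mem_univ i
    simpa using hi
  rcases huniv (c s(1,4)) with hr | hr | hr | hr
  · exact absurd hr hra
  · rcases huniv (c s(2,3)) with hs | hs | hs | hs
    · -- r=b, s=a : vertices 1 and 2 collide
      obtain ⟨i, hi⟩ := hloc 1 2 (by decide)
      apply hi
      rcases huniv i with rfl | rfl | rfl | rfl
      · rw [classDist_eq_zero ⟨s(0,1), by decide, rfl, by decide⟩,
          classDist_eq_zero ⟨s(2,3), by decide, hs, by decide⟩]
      · rw [classDist_eq_zero ⟨s(1,4), by decide, hr, by decide⟩,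
          classDist_eq_zero ⟨s(0,2), by decide, rfl, by decide⟩]
      · rw [classDist_eq_one hGc
          (by intro e he hce
              rcases hGedges e he with rfl | rfl | rfl | rfl | rfl | rfl
              · exact absurd (hce) hap
              · exact absurd (hce) hbp
              · decide
              · exact absurd (hce) hpq.symm
              · exact absurd (hr.symm.trans hce) hbp
              · exact absurd (hs.symm.trans hce) hap)
          ⟨s(0,3), by decide, rfl, edgeDist_le_one (by decide)⟩,
        classDist_eq_one hGc
          (by intro e he hce
              rcases hGedges e he with rfl | rfl | rfl | rfl | rfl | rfl
              · exact absurd (hce) hap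
              · exact absurd (hce) hbp
              · decide
              · exact absurd (hce) hpq.symm
              · exact absurd (hr.symm.trans hce) hbp
              · exact absurd (hs.symm.trans hce) hap)
          ⟨s(0,3), by decide, rfl, edgeDist_le_one (by decide)⟩]
      · rw [classDist_eq_one hGc
          (by intro e he hce
              rcases hGedges e he with rfl | rfl | rfl | rfl | rfl | rfl
              · exact absurd (hce) haq
              · exact absurd (hce) hbq
              · exact absurd (hce) hpq
              · decide
              · exact absurd (hr.symm.trans hce) hbq
              · exact absurd (hs.symm.trans hce) haq)
          ⟨s(0,4), by decide, rfl, edgeDist_le_one (by decide)⟩,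
        classDist_eq_one hGc
          (by intro e he hce
              rcases hGedges e he with rfl | rfl | rfl | rfl | rfl | rfl
              · exact absurd (hce) haq
              · exact absurd (hce) hbq
              · exact absurd (hce) hpq
              · decide
              · exact absurd (hr.symm.trans hce) hbq
              · exact absurd (hs.symm.trans hce) haq)
          ⟨s(0,4), by decide, rfl, edgeDist_le_one (by decide)⟩]
    · exact absurd hs hsb
    · exact absurd hs hsp
    · -- r=b, s=q : vertices 2 and 4 collide
      obtain ⟨i, hi⟩ := hloc 2 4 (by decide)
      apply hi
      rcases huniv i with rfl | rfl | rfl | rfl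
      · rw [classDist_eq_one hGc
          (by intro e he hce
              rcases hGedges e he with rfl | rfl | rfl | rfl | rfl | rfl
              · decide
              · exact absurd (hce) hab.symm
              · exact absurd (hce) hap.symm
              · exact absurd (hce) haq.symm
              · exact absurd (hr.symm.trans hce) hab.symm
              · exact absurd (hs.symm.trans hce) haq.symm)
          ⟨s(0,1), by decide, rfl, edgeDist_le_one (by decide)⟩,
        classDist_eq_one hGc
          (by intro e he hce
              rcases hGedges e he with rfl | rfl | rfl | rfl | rfl | rfl
              · decide
              · exact absurd (hce) hab.symm
              · exact absurd (hce) hap.symm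
              · exact absurd (hce) haq.symm
              · exact absurd (hr.symm.trans hce) hab.symm
              · exact absurd (hs.symm.trans hce) haq.symm)
          ⟨s(0,1), by decide, rfl, edgeDist_le_one (by decide)⟩]
      · rw [classDist_eq_zero ⟨s(0,2), by decide, rfl, by decide⟩,
          classDist_eq_zero ⟨s(1,4), by decide, hr, by decide⟩]
      · rw [classDist_eq_one hGc
          (by intro e he hce
              rcases hGedges e he with rfl | rfl | rfl | rfl | rfl | rfl
              · exact absurd (hce) hap
              · exact absurd (hce) hbp
              · decide
              · exact absurd (hce) hpq.symm
              · exact absurd (hr.symm.trans hce) hbp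
              · exact absurd (hs.symm.trans hce) hpq.symm)
          ⟨s(0,3), by decide, rfl, edgeDist_le_one (by decide)⟩,
        classDist_eq_one hGc
          (by intro e he hce
              rcases hGedges e he with rfl | rfl | rfl | rfl | rfl | rfl
              · exact absurd (hce) hap
              · exact absurd (hce) hbp
              · decide
              · exact absurd (hce) hpq.symm
              · exact absurd (hr.symm.trans hce) hbp
              · exact absurd (hs.symm.trans hce) hpq.symm)
          ⟨s(0,3), by decide, rfl, edgeDist_le_one (by decide)⟩]
      · rw [classDist_eq_zero ⟨s(2,3), by decide, hs, by decide⟩,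
          classDist_eq_zero ⟨s(0,4), by decide, rfl, by decide⟩]
  · rcases huniv (c s(2,3)) with hs | hs | hs | hs
    · -- r=p, s=a : vertices 1 and 3 collide
      obtain ⟨i, hi⟩ := hloc 1 3 (by decide)
      apply hi
      rcases huniv i with rfl | rfl | rfl | rfl
      · rw [classDist_eq_zero ⟨s(0,1), by decide, rfl, by decide⟩,
          classDist_eq_zero ⟨s(2,3), by decide, hs, by decide⟩]
      · rw [classDist_eq_one hGc
          (by intro e he hce
              rcases hGedges e he with rfl | rfl | rfl | rfl | rfl | rfl
              · exact absurd (hce) hab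
              · decide
              · exact absurd (hce) hbp.symm
              · exact absurd (hce) hbq.symm
              · exact absurd (hr.symm.trans hce) hbp.symm
              · exact absurd (hs.symm.trans hce) hab)
          ⟨s(0,2), by decide, rfl, edgeDist_le_one (by decide)⟩,
        classDist_eq_one hGc
          (by intro e he hce
              rcases hGedges e he with rfl | rfl | rfl | rfl | rfl | rfl
              · exact absurd (hce) hab
              · decide
              · exact absurd (hce) hbp.symm
              · exact absurd (hce) hbq.symm
              · exact absurd (hr.symm.trans hce) hbp.symm
              · exact absurd (hs.symm.trans hce) hab)
          ⟨s(0,2), by decide, rfl, edgeDist_le_one (by decide)⟩]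
      · rw [classDist_eq_zero ⟨s(1,4), by decide, hr, by decide⟩,
          classDist_eq_zero ⟨s(0,3), by decide, rfl, by decide⟩]
      · rw [classDist_eq_one hGc
          (by intro e he hce
              rcases hGedges e he with rfl | rfl | rfl | rfl | rfl | rfl
              · exact absurd (hce) haq
              · exact absurd (hce) hbq
              · exact absurd (hce) hpq
              · decide
              · exact absurd (hr.symm.trans hce) hpq
              · exact absurd (hs.symm.trans hce) haq)
          ⟨s(0,4), by decide, rfl, edgeDist_le_one (by decide)⟩,
        classDist_eq_one hGc
          (by intro e he hce
              rcases hGedges e he with rfl | rfl | rfl | rfl | rfl | rfl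
              · exact absurd (hce) haq
              · exact absurd (hce) hbq
              · exact absurd (hce) hpq
              · decide
              · exact absurd (hr.symm.trans hce) hpq
              · exact absurd (hs.symm.trans hce) haq)
          ⟨s(0,4), by decide, rfl, edgeDist_le_one (by decide)⟩]
    · exact absurd hs hsb
    · exact absurd hs hsp
    · -- r=p, s=q : vertices 3 and 4 collide
      obtain ⟨i, hi⟩ := hloc 3 4 (by decide)
      apply hi
      rcases huniv i with rfl | rfl | rfl | rfl
      · rw [classDist_eq_one hGc
          (by intro e he hce
              rcases hGedges e he with rfl | rfl | rfl | rfl | rfl | rfl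
              · decide
              · exact absurd (hce) hab.symm
              · exact absurd (hce) hap.symm
              · exact absurd (hce) haq.symm
              · exact absurd (hr.symm.trans hce) hap.symm
              · exact absurd (hs.symm.trans hce) haq.symm)
          ⟨s(0,1), by decide, rfl, edgeDist_le_one (by decide)⟩,
        classDist_eq_one hGc
          (by intro e he hce
              rcases hGedges e he with rfl | rfl | rfl | rfl | rfl | rfl
              · decide
              · exact absurd (hce) hab.symm
              · exact absurd (hce) hap.symm
              · exact absurd (hce) haq.symm
              · exact absurd (hr.symm.trans hce) hap.symm
              · exact absurd (hs.symm.trans hce) haq.symm)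
          ⟨s(0,1), by decide, rfl, edgeDist_le_one (by decide)⟩]
      · rw [classDist_eq_one hGc
          (by intro e he hce
              rcases hGedges e he with rfl | rfl | rfl | rfl | rfl | rfl
              · exact absurd (hce) hab
              · decide
              · exact absurd (hce) hbp.symm
              · exact absurd (hce) hbq.symm
              · exact absurd (hr.symm.trans hce) hbp.symm
              · exact absurd (hs.symm.trans hce) hbq.symm)
          ⟨s(0,2), by decide, rfl, edgeDist_le_one (by decide)⟩,
        classDist_eq_one hGc
          (by intro e he hce
              rcases hGedges e he with rfl | rfl | rfl | rfl | rfl | rfl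
              · exact absurd (hce) hab
              · decide
              · exact absurd (hce) hbp.symm
              · exact absurd (hce) hbq.symm
              · exact absurd (hr.symm.trans hce) hbp.symm
              · exact absurd (hs.symm.trans hce) hbq.symm)
          ⟨s(0,2), by decide, rfl, edgeDist_le_one (by decide)⟩]
      · rw [classDist_eq_zero ⟨s(0,3), by decide, rfl, by decide⟩,
          classDist_eq_zero ⟨s(1,4), by decide, hr, by decide⟩]
      · rw [classDist_eq_zero ⟨s(2,3), by decide, hs, by decide⟩,
          classDist_eq_zero ⟨s(0,4), by decide, rfl, by decide⟩]
  · exact absurd hr hrq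

end Aux

/-- The edge-locating chromatic number is not monotonic: there are finite simple connected
graphs `G` and `H` with `G` a proper subgraph of `H` and `χ'_L(H) < χ'_L(G)`. -/
theorem stmt_14 : ∃ (V : Type) (_ : Fintype V) (G H : SimpleGraph V),
    G ≤ H ∧ G ≠ H ∧ G.Connected ∧ H.Connected ∧
    edgeLocatingChromaticNumber H < edgeLocatingChromaticNumber G := by
  refine ⟨Fin 5, inferInstance, Gr, Hr, hGH, ?_, hGconn, hHconn, ?_⟩
  · intro h
    have h1 : ¬ Gr.Adj 1 2 := by decide
    rw [h] at h1
    exact h1 (by decide)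
  · have hH : edgeLocatingChromaticNumber Hr ≤ 4 := Nat.sInf_le ⟨cH, cH_locating⟩
    have hGne : {k | ∃ c : Sym2 (Fin 5) → Fin k, IsEdgeLocatingColoring Gr c}.Nonempty :=
      ⟨5, cG, cG_locating⟩
    have hG : 5 ≤ edgeLocatingChromaticNumber Gr :=
      G_lower _ (Nat.sInf_mem hGne)
    omega
end

section
/- For every integer n ≥ 4, the edge-locating chromatic number of the wheel W_n = K_1 + C_n equals n. -/
open SimpleGraph

namespace ELAux

open Fin.CommRing Fin.NatCast

lemma val_lit (m k : ℕ) [NeZero k] (h : k < m + 4) :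
    ((OfNat.ofNat k : Fin (m + 4)) : ℕ) = k := by
  have h1 : (OfNat.ofNat k : Fin (m + 4)) = ((k : ℕ) : Fin (m + 4)) := by
    simp [OfNat.ofNat, Fin.instOfNat]
  rw [h1, Fin.val_cast_of_lt h]

variable (m : ℕ)

lemma add3_ne_add1 (a : Fin (m+4)) : a + 3 ≠ a + 1 := by
  simp [Fin.ext_iff, val_lit m 3 (by omega)]
  simp [Nat.mod_eq_of_lt (show 3 < m + 4 by omega), Nat.mod_eq_of_lt (show 2 < m + 4 by omega)]
lemma add3_ne_add2 (a : Fin (m+4)) : a + 3 ≠ a + 2 := by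
  simp [Fin.ext_iff, val_lit m 3 (by omega), val_lit m 2 (by omega)]
  simp [Nat.mod_eq_of_lt (show 3 < m + 4 by omega), Nat.mod_eq_of_lt (show 2 < m + 4 by omega)]
lemma add3_ne_self (a : Fin (m+4)) : a + 3 ≠ a := by
  simp [Fin.ext_iff, val_lit m 3 (by omega)]
  simp [Nat.mod_eq_of_lt (show 3 < m + 4 by omega), Nat.mod_eq_of_lt (show 2 < m + 4 by omega)]
lemma add2_ne_add1 (a : Fin (m+4)) : a + 2 ≠ a + 1 := by
  simp [Fin.ext_iff, val_lit m 2 (by omega)]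
  simp [Nat.mod_eq_of_lt (show 3 < m + 4 by omega), Nat.mod_eq_of_lt (show 2 < m + 4 by omega)]
lemma add2_ne_self (a : Fin (m+4)) : a + 2 ≠ a := by
  simp [Fin.ext_iff, val_lit m 2 (by omega)]
  simp [Nat.mod_eq_of_lt (show 3 < m + 4 by omega), Nat.mod_eq_of_lt (show 2 < m + 4 by omega)]
lemma add1_ne_self (a : Fin (m+4)) : a + 1 ≠ a := by simp

abbrev WG : SimpleGraph (Fin 1 ⊕ Fin (m+4)) :=
  graphJoin (⊤ : SimpleGraph (Fin 1)) (cycleGraph (m+4))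

lemma adj_lr (b : Fin (m+4)) : (WG m).Adj (Sum.inl 0) (Sum.inr b) := by
  exact ⟨by simp, Or.inl (Or.inr (Or.inr ⟨0, b, rfl, rfl⟩))⟩

lemma adj_rr {a b : Fin (m+4)} :
    (WG m).Adj (Sum.inr a) (Sum.inr b) ↔ (cycleGraph (m+4)).Adj a b := by
  constructor
  · rintro ⟨hne, h | h⟩ <;>
    · rcases h with ⟨x, y, hx, hy, h⟩ | ⟨x, y, hx, hy, h⟩ | ⟨x, y, hx, hy⟩ <;> simp_all
      try exact h.symm
  · intro h
    exact ⟨by simp [h.ne], Or.inl (Or.inr (Or.inl ⟨a, b, rfl, rfl, h⟩))⟩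

lemma not_adj_ll (a b : Fin 1) : ¬ (WG m).Adj (Sum.inl a) (Sum.inl b) := by
  have : a = b := Subsingleton.elim a b
  subst this
  exact fun h => (WG m).loopless.irrefl _ h

lemma sub_one (a b : Fin (m+4)) (h : b - a = 1) : b = a + 1 :=
  (eq_add_of_sub_eq h).trans (add_comm 1 a)

lemma cyc_adj {a b : Fin (m+4)} (h : (cycleGraph (m+4)).Adj a b) :
    b = a + 1 ∨ a = b + 1 := by
  rw [cycleGraph_adj] at h
  rcases h with h | h
  · exact Or.inr (sub_one m b a h)
  · exact Or.inl (sub_one m a b h)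

lemma cyc_adj_succ (a : Fin (m+4)) : (cycleGraph (m+4)).Adj a (a + 1) := by
  rw [cycleGraph_adj]
  right
  exact add_sub_cancel_left a 1

lemma spoke_mem (b : Fin (m+4)) : s(Sum.inl 0, Sum.inr b) ∈ (WG m).edgeSet :=
  adj_lr m b

lemma rim_mem (a : Fin (m+4)) : s(Sum.inr a, Sum.inr (a+1)) ∈ (WG m).edgeSet :=
  (adj_rr m).mpr (cyc_adj_succ m a)

lemma edge_cases {e : Sym2 (Fin 1 ⊕ Fin (m+4))} (he : e ∈ (WG m).edgeSet) :
    (∃ b, e = s(Sum.inl 0, Sum.inr b)) ∨ (∃ a, e = s(Sum.inr a, Sum.inr (a+1))) := by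
  induction e using Sym2.ind with
  | _ x y =>
    rw [mem_edgeSet] at he
    rcases x with x | x <;> rcases y with y | y
    · exact absurd he (not_adj_ll m x y)
    · have : x = 0 := Subsingleton.elim x 0
      subst this
      exact Or.inl ⟨y, rfl⟩
    · have : y = 0 := Subsingleton.elim y 0
      subst this
      exact Or.inl ⟨x, Sym2.eq_swap⟩
    · have h := cyc_adj m ((adj_rr m).mp he)
      rcases h with h | h
      · exact Or.inr ⟨x, by rw [h]⟩
      · exact Or.inr ⟨y, by rw [h]; exact Sym2.eq_swap⟩

/-- The coloring function on ordered pairs. -/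
def colFun : (Fin 1 ⊕ Fin (m+4)) → (Fin 1 ⊕ Fin (m+4)) → Fin (m+4)
  | Sum.inl _, Sum.inl _ => 0
  | Sum.inl _, Sum.inr b => b
  | Sum.inr a, Sum.inl _ => a
  | Sum.inr a, Sum.inr b => if b = a + 1 then a + 2 else if a = b + 1 then b + 2 else 0

lemma colFun_symm (x y : Fin 1 ⊕ Fin (m+4)) : colFun m x y = colFun m y x := by
  rcases x with x | x <;> rcases y with y | y <;> simp only [colFun]
  by_cases h1 : y = x + 1
  · subst h1
    have h3 : x ≠ x + 1 + 1 := fun h =>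
      absurd (show x + 2 = x by linear_combination -h) (add2_ne_self m x)
    simp [h3]
  · by_cases h2 : x = y + 1
    · subst h2
      simp [h1]
    · simp [h1, h2]

noncomputable def col : Sym2 (Fin 1 ⊕ Fin (m+4)) → Fin (m+4) :=
  Sym2.lift ⟨colFun m, colFun_symm m⟩

lemma col_spoke (b : Fin (m+4)) : col m s(Sum.inl 0, Sum.inr b) = b := by
  simp [col, colFun]

lemma col_rim (a : Fin (m+4)) : col m s(Sum.inr a, Sum.inr (a+1)) = a + 2 := by
  simp [col, colFun]

lemma col_of_mem {e : Sym2 (Fin 1 ⊕ Fin (m+4))} (he : e ∈ (WG m).edgeSet)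
    {i : Fin (m+4)} (hv : Sum.inr i ∈ e) :
    col m e = i ∨ col m e = i + 1 ∨ col m e = i + 2 := by
  rcases edge_cases m he with ⟨b, rfl⟩ | ⟨a, rfl⟩
  · rw [Sym2.mem_iff] at hv
    rcases hv with hv | hv
    · exact absurd hv (by simp)
    · have hb : b = i := by injection hv.symm
      subst hb
      exact Or.inl (col_spoke m b)
  · rw [Sym2.mem_iff] at hv
    rcases hv with hv | hv
    · have ha : a = i := by injection hv.symm
      subst ha
      exact Or.inr (Or.inr (col_rim m a))
    · have ha : i = a + 1 := by injection hv
      subst ha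
      refine Or.inr (Or.inl ?_)
      rw [col_rim m a]
      ring

lemma conn : (WG m).Connected := by
  rw [connected_iff]
  refine ⟨?_, ⟨Sum.inl 0⟩⟩
  intro x y
  have key : ∀ z, (WG m).Reachable (Sum.inl 0) z := by
    rintro (z | z)
    · have : z = 0 := Subsingleton.elim z 0
      rw [this]
    · exact (adj_lr m z).reachable
  exact (key x).symm.trans (key y)

lemma dist_rim_hub (i : Fin (m+4)) : (WG m).dist (Sum.inr i) (Sum.inl 0) = 1 :=
  dist_eq_one_iff_adj.mpr (adj_lr m i).symm

lemma one_le_dist {x y : Fin 1 ⊕ Fin (m+4)} (h : x ≠ y) : 1 ≤ (WG m).dist x y :=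
  (conn m).pos_dist_of_ne h

lemma edgeDist_mk (v x y : Fin 1 ⊕ Fin (m+4)) :
    edgeDist (WG m) v s(x, y) = min ((WG m).dist v x) ((WG m).dist v y) := by
  simp [edgeDist]

lemma one_le_edgeDist {v : Fin 1 ⊕ Fin (m+4)} {e : Sym2 (Fin 1 ⊕ Fin (m+4))}
    (hv : v ∉ e) : 1 ≤ edgeDist (WG m) v e := by
  induction e using Sym2.ind with
  | _ x y =>
    rw [Sym2.mem_iff] at hv
    push_neg at hv
    rw [edgeDist_mk]
    exact le_min (one_le_dist m hv.1) (one_le_dist m hv.2)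

lemma edgeDist_zero {v : Fin 1 ⊕ Fin (m+4)} {e : Sym2 (Fin 1 ⊕ Fin (m+4))}
    (hv : v ∈ e) : edgeDist (WG m) v e = 0 := by
  induction e using Sym2.ind with
  | _ x y =>
    rw [Sym2.mem_iff] at hv
    rw [edgeDist_mk]
    rcases hv with rfl | rfl
    · simp [SimpleGraph.dist_self]
    · simp [SimpleGraph.dist_self]

lemma classDist_le {e : Sym2 (Fin 1 ⊕ Fin (m+4))} (he : e ∈ (WG m).edgeSet)
    {i : Fin (m+4)} (hc : col m e = i) (v : Fin 1 ⊕ Fin (m+4)) :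
    classDist (WG m) (col m) v i ≤ (edgeDist (WG m) v e : ℕ∞) :=
  iInf₂_le e ⟨he, hc⟩

lemma classDist_hub (j : Fin (m+4)) :
    classDist (WG m) (col m) (Sum.inl 0) j = 0 := by
  apply le_antisymm _ zero_le
  have h := classDist_le m (spoke_mem m j) (col_spoke m j) (Sum.inl 0)
  rwa [edgeDist_zero m (by simp), Nat.cast_zero] at h

lemma classDist_rim_zero {i j : Fin (m+4)} (h : j = i ∨ j = i + 1 ∨ j = i + 2) :
    classDist (WG m) (col m) (Sum.inr i) j = 0 := by
  apply le_antisymm _ zero_le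
  rcases h with rfl | rfl | rfl
  · have h := classDist_le m (spoke_mem m j) (col_spoke m j) (Sum.inr j)
    rwa [edgeDist_zero m (by simp), Nat.cast_zero] at h
  · have hcol : col m s(Sum.inr (i - 1), Sum.inr ((i - 1) + 1)) = i + 1 := by
      rw [col_rim]; ring
    have h := classDist_le m (rim_mem m (i - 1)) hcol (Sum.inr i)
    have hmem : (Sum.inr i : Fin 1 ⊕ Fin (m+4)) ∈ s(Sum.inr (i-1), Sum.inr ((i-1)+1)) := by
      rw [Sym2.mem_iff]
      right
      congr 1
      ring
    rwa [edgeDist_zero m hmem, Nat.cast_zero] at h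
  · have h := classDist_le m (rim_mem m i) (col_rim m i) (Sum.inr i)
    rwa [edgeDist_zero m (by simp), Nat.cast_zero] at h

lemma classDist_rim_one {i j : Fin (m+4)} (h0 : j ≠ i) (h1 : j ≠ i + 1) (h2 : j ≠ i + 2) :
    classDist (WG m) (col m) (Sum.inr i) j = 1 := by
  apply le_antisymm
  · have h := classDist_le m (spoke_mem m j) (col_spoke m j) (Sum.inr i)
    refine h.trans ?_
    rw [edgeDist_mk, dist_rim_hub]
    exact_mod_cast Nat.cast_le.mpr (min_le_left _ _)
  · refine le_iInf₂ fun e he => ?_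
    obtain ⟨hes, hec⟩ := he
    have hv : Sum.inr i ∉ e := by
      intro hv
      rcases col_of_mem m hes hv with hh | hh | hh
      · exact h0 (hec ▸ hh ▸ rfl)
      · exact h1 (hec ▸ hh ▸ rfl)
      · exact h2 (hec ▸ hh ▸ rfl)
    exact_mod_cast Nat.one_le_cast.mpr (one_le_edgeDist m hv)

lemma rim_inj {a b : Fin (m+4)}
    (h : s(Sum.inr a, Sum.inr (a+1)) = (s(Sum.inr b, Sum.inr (b+1)) : Sym2 (Fin 1 ⊕ Fin (m+4)))) :
    a = b := by
  rw [Sym2.eq_iff] at h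
  rcases h with ⟨h1, _⟩ | ⟨h1, h2⟩
  · injection h1
  · exfalso
    have ha : a = b + 1 := by injection h1
    have hb : a + 1 = b := by injection h2
    rw [ha] at hb
    exact add2_ne_self m b (by linear_combination hb)

lemma proper : ∀ e ∈ (WG m).edgeSet, ∀ f ∈ (WG m).edgeSet, e ≠ f →
    (∃ x, x ∈ e ∧ x ∈ f) → col m e ≠ col m f := by
  intro e he f hf hne hshare
  rcases edge_cases m he with ⟨b, rfl⟩ | ⟨a, rfl⟩ <;>
    rcases edge_cases m hf with ⟨b', rfl⟩ | ⟨a', rfl⟩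
  · rw [col_spoke, col_spoke]
    intro hbb
    exact hne (by rw [hbb])
  · obtain ⟨x, hx1, hx2⟩ := hshare
    rw [Sym2.mem_iff] at hx1 hx2
    have hb : b = a' ∨ b = a' + 1 := by
      rcases hx1 with rfl | rfl
      · rcases hx2 with h | h <;> exact absurd h (by simp)
      · rcases hx2 with h | h
        · exact Or.inl (by injection h)
        · exact Or.inr (by injection h)
    rw [col_spoke, col_rim]
    rcases hb with rfl | rfl
    · exact fun h => add2_ne_self m b h.symm
    · intro h
      exact add2_ne_add1 m a' (by linear_combination -h)
  · obtain ⟨x, hx1, hx2⟩ := hshare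
    rw [Sym2.mem_iff] at hx1 hx2
    have hb : b' = a ∨ b' = a + 1 := by
      rcases hx2 with rfl | rfl
      · rcases hx1 with h | h <;> exact absurd h (by simp)
      · rcases hx1 with h | h
        · exact Or.inl (by injection h)
        · exact Or.inr (by injection h)
    rw [col_spoke, col_rim]
    rcases hb with rfl | rfl
    · exact fun h => add2_ne_self m b' h
    · intro h
      exact add2_ne_add1 m a (by linear_combination h)
  · rw [col_rim, col_rim]
    intro h
    exact hne (by rw [add_right_cancel h])

lemma locating : ∀ u v : Fin 1 ⊕ Fin (m+4), u ≠ v →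
    ∃ j, classDist (WG m) (col m) u j ≠ classDist (WG m) (col m) v j := by
  have hub_rim : ∀ (x : Fin 1) (i : Fin (m+4)),
      ∃ j, classDist (WG m) (col m) (Sum.inl x) j ≠ classDist (WG m) (col m) (Sum.inr i) j := by
    intro x i
    obtain rfl : x = 0 := Subsingleton.elim x 0
    refine ⟨i + 3, ?_⟩
    rw [classDist_hub, classDist_rim_one m (add3_ne_self m i) (add3_ne_add1 m i)
      (add3_ne_add2 m i)]
    simp
  rintro (x | i) (y | i') hne
  · exact absurd (congrArg Sum.inl (Subsingleton.elim x y)) hne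
  · exact hub_rim x i'
  · obtain ⟨j, hj⟩ := hub_rim y i
    exact ⟨j, hj.symm⟩
  · have hii : i ≠ i' := fun h => hne (by rw [h])
    by_cases h1 : i = i' + 1
    · refine ⟨i', ?_⟩
      rw [classDist_rim_zero m (Or.inl rfl)]
      rw [classDist_rim_one m (Ne.symm hii) ?_ ?_]
      · simp
      · subst h1
        intro h
        exact add2_ne_self m i' (by linear_combination -h)
      · subst h1
        intro h
        exact add3_ne_self m i' (by linear_combination -h)
    · by_cases h2 : i = i' + 2
      · refine ⟨i + 1, ?_⟩
        rw [classDist_rim_zero m (Or.inr (Or.inl rfl))]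
        subst h2
        rw [classDist_rim_one m ?_ ?_ ?_]
        · simp
        · intro h
          exact add3_ne_self m i' (by linear_combination h)
        · intro h
          exact add3_ne_add1 m i' (by linear_combination h)
        · intro h
          exact add3_ne_add2 m i' (by linear_combination h)
      · refine ⟨i, ?_⟩
        rw [classDist_rim_zero m (Or.inl rfl)]
        rw [classDist_rim_one m hii h1 h2]
        simp

lemma lower_bound {k : ℕ} (c : Sym2 (Fin 1 ⊕ Fin (m+4)) → Fin k)
    (hc : IsEdgeLocatingColoring (WG m) c) : m + 4 ≤ k := by
  have hinj : Function.Injective (fun b : Fin (m+4) => c s(Sum.inl 0, Sum.inr b)) := by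
    intro b b' h
    by_contra hbb
    refine hc.1 _ (spoke_mem m b) _ (spoke_mem m b') ?_ ⟨Sum.inl 0, by simp, by simp⟩ h
    intro heq
    rcases Sym2.eq_iff.mp heq with ⟨-, hh⟩ | ⟨hh, -⟩
    · exact hbb (by injection hh)
    · exact absurd hh (by simp)
  simpa using Fintype.card_le_of_injective _ hinj

end ELAux

/-- For every integer `n ≥ 4`, the edge-locating chromatic number of the wheel
`W_n = K_1 + C_n` equals `n`. -/
theorem stmt_16 (n : ℕ) (hn : 4 ≤ n) :
    edgeLocatingChromaticNumber
      (graphJoin (⊤ : SimpleGraph (Fin 1)) (SimpleGraph.cycleGraph n)) = n := by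
  obtain ⟨m, rfl⟩ : ∃ m, n = m + 4 := ⟨n - 4, by omega⟩
  have hmem : m + 4 ∈ {k | ∃ c : Sym2 (Fin 1 ⊕ Fin (m+4)) → Fin k,
      IsEdgeLocatingColoring (ELAux.WG m) c} :=
    ⟨ELAux.col m, ELAux.proper m, ELAux.locating m⟩
  refine le_antisymm (Nat.sInf_le hmem) (le_csInf ⟨m + 4, hmem⟩ ?_)
  rintro k ⟨c, hc⟩
  exact ELAux.lower_bound m c hc
end

section
/- For integers p ≥ q ≥ 1 with p ≥ 2, the edge-locating chromatic number of the double star S_{p,q} equals p + 1 if p > q, and equals p + 2 if p = q. -/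
open SimpleGraph

/-- The double star `S_{p,q}`: two adjacent centers, one with `p` pendant leaves and the other
with `q` pendant leaves. -/
def doubleStar (p q : ℕ) : SimpleGraph (Option (Fin p) ⊕ Option (Fin q)) :=
  SimpleGraph.fromRel (fun x y =>
    (x = Sum.inl none ∧ y = Sum.inr none) ∨
    (∃ i, x = Sum.inl none ∧ y = Sum.inl (some i)) ∨
    (∃ j, x = Sum.inr none ∧ y = Sum.inr (some j)))

namespace DS
variable {p q : ℕ}

abbrev VV (p q : ℕ) := Option (Fin p) ⊕ Option (Fin q)
def v0 : VV p q := Sum.inl none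
def u0 : VV p q := Sum.inr none
def av (i : Fin p) : VV p q := Sum.inl (some i)
def bv (j : Fin q) : VV p q := Sum.inr (some j)

lemma adj_vu : (doubleStar p q).Adj v0 u0 := by
  simp [doubleStar, v0, u0]

lemma adj_va (i : Fin p) : (doubleStar p q).Adj v0 (av i) := by
  simp [doubleStar, v0, av]

lemma adj_ub (j : Fin q) : (doubleStar p q).Adj u0 (bv j) := by
  simp [doubleStar, u0, bv]

lemma adj_cases {x y : VV p q} (h : (doubleStar p q).Adj x y) :
    (x = v0 ∧ y = u0) ∨ (y = v0 ∧ x = u0) ∨ (∃ i, x = v0 ∧ y = av i) ∨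
    (∃ i, y = v0 ∧ x = av i) ∨ (∃ j, x = u0 ∧ y = bv j) ∨ (∃ j, y = u0 ∧ x = bv j) := by
  rw [doubleStar, SimpleGraph.fromRel_adj] at h
  obtain ⟨-, h | h⟩ := h <;>
    [skip; (rcases h with ⟨h1, h2⟩ | ⟨i, h1, h2⟩ | ⟨j, h1, h2⟩)] <;>
    simp_all [v0, u0, av, bv] <;> tauto

lemma reach_v (x : VV p q) : (doubleStar p q).Reachable v0 x := by
  rcases x with (_ | i) | (_ | j)
  · exact Reachable.refl _
  · exact (adj_va i).reachable
  · exact adj_vu.reachable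
  · exact adj_vu.reachable.trans (adj_ub j).reachable

lemma reach (x y : VV p q) : (doubleStar p q).Reachable x y :=
  (reach_v x).symm.trans (reach_v y)

lemma dist_pos {x y : VV p q} (h : x ≠ y) : 0 < (doubleStar p q).dist x y :=
  (reach x y).pos_dist_of_ne h

lemma one_le_dist {x y : VV p q} (h : x ≠ y) : 1 ≤ (doubleStar p q).dist x y :=
  dist_pos h

lemma two_le_dist {x y : VV p q} (h : x ≠ y) (hna : ¬ (doubleStar p q).Adj x y) :
    2 ≤ (doubleStar p q).dist x y := by
  have h1 := dist_pos h
  have h2 : (doubleStar p q).dist x y ≠ 1 := fun hc => hna (dist_eq_one_iff_adj.mp hc)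
  omega

lemma edgeDist_mk (x y z : VV p q) :
    edgeDist (doubleStar p q) x s(y, z) = min ((doubleStar p q).dist x y) ((doubleStar p q).dist x z) :=
  rfl


lemma not_adj_bv_v0 (j : Fin q) : ¬ (doubleStar p q).Adj (bv j) (v0 : VV p q) := by
  intro h
  rcases adj_cases h with ⟨h1,h2⟩|⟨h1,h2⟩|⟨i,h1,h2⟩|⟨i,h1,h2⟩|⟨j',h1,h2⟩|⟨j',h1,h2⟩ <;>
    simp_all [v0, u0, av, bv]

lemma not_adj_bv_av (j : Fin q) (i : Fin p) : ¬ (doubleStar p q).Adj (bv j) (av i) := by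
  intro h
  rcases adj_cases h with ⟨h1,h2⟩|⟨h1,h2⟩|⟨i',h1,h2⟩|⟨i',h1,h2⟩|⟨j',h1,h2⟩|⟨j',h1,h2⟩ <;>
    simp_all [v0, u0, av, bv]

lemma dist_av_v0 (i : Fin p) : (doubleStar p q).dist (av i) v0 = 1 :=
  dist_eq_one_iff_adj.mpr (adj_va i).symm

lemma dist_bv_v0 (j : Fin q) : (doubleStar p q).dist (bv j) (v0 : VV p q) = 2 := by
  have hle : (doubleStar p q).dist (bv j) (v0 : VV p q) ≤ 2 := by
    simpa using SimpleGraph.dist_le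
      (Walk.cons (adj_ub j).symm (Walk.cons (adj_vu (p:=p) (q:=q)).symm Walk.nil))
  have hne : (bv j : VV p q) ≠ v0 := by simp [bv, v0]
  have := two_le_dist hne (not_adj_bv_v0 j)
  omega

section generic
variable {W : Type*} {G : SimpleGraph W} {k : ℕ} {c : Sym2 W → Fin k}

lemma classDist_le {e : Sym2 W} {m : Fin k} (he : e ∈ G.edgeSet) (hc : c e = m) (x : W) :
    classDist G c x m ≤ (edgeDist G x e : ℕ∞) := by
  exact iInf₂_le e ⟨he, hc⟩

lemma le_classDist {m : Fin k} {x : W} {d : ℕ∞}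
    (h : ∀ e, e ∈ G.edgeSet → c e = m → d ≤ (edgeDist G x e : ℕ∞)) :
    d ≤ classDist G c x m :=
  le_iInf₂ fun e he => h e he.1 he.2

lemma edgeDist_eq_zero_of_mem {e : Sym2 W} {x : W} (hx : x ∈ e) : edgeDist G x e = 0 := by
  induction e using Sym2.ind with
  | _ y z =>
    rw [Sym2.mem_iff] at hx
    have : edgeDist G x s(y,z) = min (G.dist x y) (G.dist x z) := rfl
    rcases hx with rfl | rfl <;> simp [this]

lemma classDist_eq_zero_of_mem {e : Sym2 W} {m : Fin k} {x : W}
    (he : e ∈ G.edgeSet) (hc : c e = m) (hx : x ∈ e) : classDist G c x m = 0 := by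
  have := classDist_le he hc x
  rw [edgeDist_eq_zero_of_mem hx] at this
  simpa using this

lemma classDist_eq_of_unique {e : Sym2 W} {m : Fin k} (x : W)
    (he : e ∈ G.edgeSet) (hc : c e = m) (hu : ∀ f, f ∈ G.edgeSet → c f = m → f = e) :
    classDist G c x m = (edgeDist G x e : ℕ∞) :=
  le_antisymm (classDist_le he hc x) (le_classDist fun f hf hcf => by rw [hu f hf hcf])

end generic

lemma one_le_edgeDist {e : Sym2 (VV p q)} {x : VV p q} (hx : x ∉ e) :
    1 ≤ edgeDist (doubleStar p q) x e := by
  induction e using Sym2.ind with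
  | _ y z =>
    rw [Sym2.mem_iff] at hx
    push_neg at hx
    have : edgeDist (doubleStar p q) x s(y,z)
        = min ((doubleStar p q).dist x y) ((doubleStar p q).dist x z) := rfl
    rw [this]
    exact le_min (one_le_dist hx.1) (one_le_dist hx.2)

lemma classDist_ne_zero {k : ℕ} {c : Sym2 (VV p q) → Fin k} {m : Fin k} {x : VV p q}
    (h : ∀ e, e ∈ (doubleStar p q).edgeSet → c e = m → x ∉ e) :
    classDist (doubleStar p q) c x m ≠ 0 := by
  have : (1 : ℕ∞) ≤ classDist (doubleStar p q) c x m := by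
    apply le_classDist
    intro e he hc
    exact_mod_cast Nat.one_le_cast.mpr (one_le_edgeDist (h e he hc))
  intro h0
  rw [h0] at this
  simp at this

lemma edge_cases {f : Sym2 (VV p q)} (hf : f ∈ (doubleStar p q).edgeSet) :
    f = s(v0, u0) ∨ (∃ i, f = s(v0, av i)) ∨ (∃ j, f = s(u0, bv j)) := by
  induction f using Sym2.ind with
  | _ x y =>
    rw [SimpleGraph.mem_edgeSet] at hf
    rcases adj_cases hf with ⟨h1,h2⟩|⟨h1,h2⟩|⟨i,h1,h2⟩|⟨i,h1,h2⟩|⟨j,h1,h2⟩|⟨j,h1,h2⟩ <;>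
      subst h1 <;> subst h2
    · exact Or.inl rfl
    · exact Or.inl (Sym2.eq_swap)
    · exact Or.inr (Or.inl ⟨i, rfl⟩)
    · exact Or.inr (Or.inl ⟨i, Sym2.eq_swap⟩)
    · exact Or.inr (Or.inr ⟨j, rfl⟩)
    · exact Or.inr (Or.inr ⟨j, Sym2.eq_swap⟩)


/-! ### The coloring construction -/

def colf (s : ℕ) : VV p q → VV p q → ℕ
  | Sum.inl none, Sum.inl (some i) => i.val + 1
  | Sum.inl (some i), Sum.inl none => i.val + 1
  | Sum.inr none, Sum.inr (some j) => j.val + s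
  | Sum.inr (some j), Sum.inr none => j.val + s
  | _, _ => 0

lemma colf_symm (s : ℕ) : ∀ x y : VV p q, colf s x y = colf s y x := by
  rintro ((_|i)|(_|i)) ((_|j)|(_|j)) <;> rfl

def cfun (k s : ℕ) (hk0 : 0 < k) : Sym2 (VV p q) → Fin k := fun e =>
  ⟨(Sym2.lift ⟨colf s, colf_symm s⟩ e) % k, Nat.mod_lt _ hk0⟩

section constr
variable {k s m0 : ℕ} (hk0 : 0 < k)

lemma cfun_vu : (cfun (p := p) (q := q) k s hk0 s(v0, u0)).val = 0 := by
  simp [cfun, v0, u0, colf]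

lemma cfun_va (i : Fin p) (h : i.val + 1 < k) :
    (cfun (p := p) (q := q) k s hk0 s(v0, av i)).val = i.val + 1 := by
  simp only [cfun, v0, av, Sym2.lift_mk]
  exact Nat.mod_eq_of_lt h

lemma cfun_ub (j : Fin q) (h : j.val + s < k) :
    (cfun (p := p) (q := q) k s hk0 s(u0, bv j)).val = j.val + s := by
  simp only [cfun, u0, bv, Sym2.lift_mk]
  exact Nat.mod_eq_of_lt h

variable (hk : p < k) (hs : 1 ≤ s) (hsq : s + q ≤ k) (hq1 : 1 ≤ q)
  (hm1 : 1 ≤ m0) (hmp : m0 ≤ p) (hdisj : m0 < s ∨ s + q ≤ m0)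

include hk hs hsq in
lemma cfun_proper :
    ∀ e ∈ (doubleStar p q).edgeSet, ∀ f ∈ (doubleStar p q).edgeSet, e ≠ f →
      (∃ x, x ∈ e ∧ x ∈ f) → cfun k s hk0 e ≠ cfun k s hk0 f := by
  rintro e he f hf hne ⟨x, hxe, hxf⟩ hcc
  have hval := congrArg Fin.val hcc
  rcases edge_cases he with rfl | ⟨i, rfl⟩ | ⟨j, rfl⟩ <;>
    rcases edge_cases hf with rfl | ⟨i', rfl⟩ | ⟨j', rfl⟩
  · exact hne rfl
  · have hi := i'.isLt
    rw [cfun_vu, cfun_va hk0 i' (by omega)] at hval; omega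
  · have hj := j'.isLt
    rw [cfun_vu, cfun_ub hk0 j' (by omega)] at hval; omega
  · have hi := i.isLt
    rw [cfun_vu, cfun_va hk0 i (by omega)] at hval; omega
  · have hi := i.isLt; have hi' := i'.isLt
    rw [cfun_va hk0 i (by omega), cfun_va hk0 i' (by omega)] at hval
    exact hne (by rw [show i = i' from Fin.ext (by omega)])
  · -- va vs ub : no shared vertex
    rw [Sym2.mem_iff] at hxe hxf
    rcases hxe with rfl | rfl <;> rcases hxf with h | h <;> simp_all [v0, u0, av, bv]
  · have hj := j.isLt
    rw [cfun_ub hk0 j (by omega), cfun_vu] at hval; omega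
  · rw [Sym2.mem_iff] at hxe hxf
    rcases hxe with rfl | rfl <;> rcases hxf with h | h <;> simp_all [v0, u0, av, bv]
  · have hj := j.isLt; have hj' := j'.isLt
    rw [cfun_ub hk0 j (by omega), cfun_ub hk0 j' (by omega)] at hval
    exact hne (by rw [show j = j' from Fin.ext (by omega)])

include hk hs hsq in
lemma not_mem_of_color {x : VV p q} {m : ℕ}
    (h0 : m = 0 → x ≠ v0 ∧ x ≠ u0)
    (ha : ∀ i : Fin p, i.val + 1 = m → x ≠ v0 ∧ x ≠ av i)
    (hb : ∀ j : Fin q, j.val + s = m → x ≠ u0 ∧ x ≠ bv j) :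
    ∀ f, f ∈ (doubleStar p q).edgeSet → ((cfun (p := p) (q := q) k s hk0) f).val = m →
      x ∉ f := by
  intro f hf hc
  rcases edge_cases hf with rfl | ⟨i, rfl⟩ | ⟨j, rfl⟩
  · rw [cfun_vu] at hc
    obtain ⟨h1, h2⟩ := h0 hc.symm
    rw [Sym2.mem_iff]; rintro (rfl | rfl) <;> simp_all
  · have hi := i.isLt
    rw [cfun_va hk0 i (by omega)] at hc
    obtain ⟨h1, h2⟩ := ha i hc
    rw [Sym2.mem_iff]; rintro (rfl | rfl) <;> simp_all
  · have hj := j.isLt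
    rw [cfun_ub hk0 j (by omega)] at hc
    obtain ⟨h1, h2⟩ := hb j hc
    rw [Sym2.mem_iff]; rintro (rfl | rfl) <;> simp_all

include hk hs hsq hm1 hmp hdisj in
lemma class_star {f : Sym2 (VV p q)} (hf : f ∈ (doubleStar p q).edgeSet)
    (hc : ((cfun (p := p) (q := q) k s hk0) f).val = m0) :
    f = s(v0, av ⟨m0 - 1, by omega⟩) := by
  rcases edge_cases hf with rfl | ⟨i, rfl⟩ | ⟨j, rfl⟩
  · rw [cfun_vu] at hc; omega
  · have hi := i.isLt
    rw [cfun_va hk0 i (by omega)] at hc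
    have hieq : i = (⟨m0 - 1, by omega⟩ : Fin p) := by
      apply Fin.ext; simp only []; omega
    exact congrArg (fun t => s(v0, av t)) hieq
  · have hj := j.isLt
    rw [cfun_ub hk0 j (by omega)] at hc
    omega

end constr

section locating
variable {k s m0 : ℕ} (hk0 : 0 < k) (hk : p < k) (hs : 1 ≤ s) (hsq : s + q ≤ k)
  (hq1 : 1 ≤ q) (hm1 : 1 ≤ m0) (hmp : m0 ≤ p) (hdisj : m0 < s ∨ s + q ≤ m0)

/-- Key step: if `x` lies on an edge of color `m` and `y` is on no edge of color `m`,
their codes differ at `m`. -/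
lemma hkey {x y : VV p q} {m : ℕ} (hm : m < k) (e : Sym2 (VV p q))
    (he : e ∈ (doubleStar p q).edgeSet) (hc : (cfun k s hk0 e).val = m) (hx : x ∈ e)
    (hy : ∀ f, f ∈ (doubleStar p q).edgeSet → (cfun k s hk0 f).val = m → y ∉ f) :
    classDist (doubleStar p q) (cfun k s hk0) x ⟨m, hm⟩ ≠
      classDist (doubleStar p q) (cfun k s hk0) y ⟨m, hm⟩ := by
  rw [classDist_eq_zero_of_mem he (Fin.ext hc) hx]
  intro h
  exact classDist_ne_zero (fun f hf hcf => hy f hf (congrArg Fin.val hcf)) h.symm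

include hk hs hsq in
lemma diff_center_leaf {x y : VV p q} (hx : x = v0 ∨ x = u0)
    (hy : (∃ i, y = av i) ∨ ∃ j, y = bv j) :
    ∃ m, classDist (doubleStar p q) (cfun k s hk0) x m ≠
      classDist (doubleStar p q) (cfun k s hk0) y m := by
  refine ⟨⟨0, hk0⟩, hkey hk0 hk0 s(v0, u0) ((SimpleGraph.mem_edgeSet _).mpr adj_vu)
    (cfun_vu hk0) ?_ ?_⟩
  · rcases hx with rfl | rfl <;> simp [Sym2.mem_iff]
  · apply not_mem_of_color hk0 hk hs hsq
    · intro _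
      rcases hy with ⟨i, rfl⟩ | ⟨j, rfl⟩ <;> constructor <;> simp [av, bv, v0, u0]
    · intro i h; exact absurd h (by omega)
    · intro j h; exact absurd h (by omega)

include hk hs hsq hm1 hmp hdisj in
lemma diff_vu :
    ∃ m, classDist (doubleStar p q) (cfun k s hk0) (v0 : VV p q) m ≠
      classDist (doubleStar p q) (cfun k s hk0) (u0 : VV p q) m := by
  have hi0 : (⟨m0 - 1, by omega⟩ : Fin p).val + 1 < k := by show m0 - 1 + 1 < k; omega
  refine ⟨⟨m0, by omega⟩, hkey hk0 (by omega) s(v0, av ⟨m0 - 1, by omega⟩)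
    ((SimpleGraph.mem_edgeSet _).mpr (adj_va _))
    (by rw [cfun_va hk0 _ hi0]; show m0 - 1 + 1 = m0; omega) ?_ ?_⟩
  · simp [Sym2.mem_iff]
  · apply not_mem_of_color hk0 hk hs hsq
    · intro h; exact absurd h (by omega)
    · intro i h; constructor <;> simp [av, v0, u0]
    · intro j h; exact absurd h (by have := j.isLt; omega)

include hk hs hsq in
lemma diff_aa {i i' : Fin p} (hii : i ≠ i') :
    ∃ m, classDist (doubleStar p q) (cfun k s hk0) (av i) m ≠
      classDist (doubleStar p q) (cfun k s hk0) (av i') m := by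
  have hiv := i.isLt
  refine ⟨⟨i.val + 1, by omega⟩, hkey hk0 (by omega) s(v0, av i)
    ((SimpleGraph.mem_edgeSet _).mpr (adj_va _)) (cfun_va hk0 i (by omega)) ?_ ?_⟩
  · simp [Sym2.mem_iff]
  · apply not_mem_of_color hk0 hk hs hsq
    · intro h; exact absurd h (by omega)
    · intro i'' h
      refine ⟨by simp [av, v0], fun hh => hii ?_⟩
      have h2 : i' = i'' := by simpa [av] using hh
      have h3 := congrArg Fin.val h2
      exact Fin.ext (by omega)
    · intro j h; constructor <;> simp [av, u0, bv]

include hk hs hsq in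
lemma diff_bb {j j' : Fin q} (hjj : j ≠ j') :
    ∃ m, classDist (doubleStar p q) (cfun k s hk0) (bv j) m ≠
      classDist (doubleStar p q) (cfun k s hk0) (bv j') m := by
  have hjv := j.isLt
  refine ⟨⟨j.val + s, by omega⟩, hkey hk0 (by omega) s(u0, bv j)
    ((SimpleGraph.mem_edgeSet _).mpr (adj_ub _)) (cfun_ub hk0 j (by omega)) ?_ ?_⟩
  · simp [Sym2.mem_iff]
  · apply not_mem_of_color hk0 hk hs hsq
    · intro h; exact absurd h (by omega)
    · intro i h; constructor <;> simp [av, v0, bv]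
    · intro j'' h
      refine ⟨by simp [bv, u0], fun hh => hjj ?_⟩
      have h2 : j' = j'' := by simpa [bv] using hh
      have h3 := congrArg Fin.val h2
      exact Fin.ext (by omega)

include hk hs hsq hq1 hm1 hmp hdisj in
lemma diff_ab (i : Fin p) (j' : Fin q) :
    ∃ m, classDist (doubleStar p q) (cfun k s hk0) (av i) m ≠
      classDist (doubleStar p q) (cfun k s hk0) (bv j') m := by
  have hiv := i.isLt
  have hjv := j'.isLt
  by_cases hcol : i.val + 1 = j'.val + s
  · -- the hard case: same incident color; use color m0 and actual distances
    have hipf : m0 - 1 < p := by omega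
    set i0 : Fin p := ⟨m0 - 1, hipf⟩ with hi0def
    have hm0k : m0 < k := by omega
    have hcstar : cfun (p := p) (q := q) k s hk0 s(v0, av i0) = ⟨m0, hm0k⟩ := by
      apply Fin.ext
      rw [cfun_va hk0 _ (by show m0 - 1 + 1 < k; omega)]
      show m0 - 1 + 1 = m0; omega
    have huniq : ∀ f, f ∈ (doubleStar p q).edgeSet →
        cfun (p := p) (q := q) k s hk0 f = ⟨m0, hm0k⟩ → f = s(v0, av i0) := by
      intro f hf hcf
      exact class_star hk0 hk hs hsq hm1 hmp hdisj hf (by rw [hcf])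
    have hne1 : (av i : VV p q) ≠ av i0 := by
      simp only [av, ne_eq, Sum.inl.injEq, Option.some.injEq]
      intro hh
      have h3 := congrArg Fin.val hh
      have h4 : i.val = m0 - 1 := h3
      rcases hdisj with hd | hd <;> omega
    have hda : edgeDist (doubleStar p q) (av i) s(v0, av i0) = 1 := by
      rw [edgeDist_mk, dist_av_v0]
      have := one_le_dist (p := p) (q := q) hne1
      omega
    have hdb : edgeDist (doubleStar p q) (bv j') s(v0, av i0) = 2 := by
      rw [edgeDist_mk, dist_bv_v0]
      have := two_le_dist (p := p) (q := q)
        (x := bv j') (y := av i0) (by simp [bv, av]) (not_adj_bv_av j' i0)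
      omega
    refine ⟨⟨m0, hm0k⟩, ?_⟩
    rw [classDist_eq_of_unique _ ((SimpleGraph.mem_edgeSet _).mpr (adj_va i0)) hcstar huniq,
        classDist_eq_of_unique _ ((SimpleGraph.mem_edgeSet _).mpr (adj_va i0)) hcstar huniq,
        hda, hdb]
    norm_num
  · refine ⟨⟨i.val + 1, by omega⟩, hkey hk0 (by omega) s(v0, av i)
      ((SimpleGraph.mem_edgeSet _).mpr (adj_va _)) (cfun_va hk0 i (by omega)) ?_ ?_⟩
    · simp [Sym2.mem_iff]
    · apply not_mem_of_color hk0 hk hs hsq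
      · intro h; exact absurd h (by omega)
      · intro i'' h; constructor <;> simp [av, v0, bv]
      · intro j'' h
        refine ⟨by simp [bv, u0], fun hh => ?_⟩
        have h2 : j' = j'' := by simpa [bv] using hh
        have h3 := congrArg Fin.val h2
        omega

include hk hs hsq hq1 hm1 hmp hdisj in
lemma cfun_locating :
    ∀ x y : VV p q, x ≠ y →
      ∃ m, classDist (doubleStar p q) (cfun k s hk0) x m ≠
           classDist (doubleStar p q) (cfun k s hk0) y m := by
  have sym : ∀ {x y : VV p q},
      (∃ m, classDist (doubleStar p q) (cfun k s hk0) x m ≠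
        classDist (doubleStar p q) (cfun k s hk0) y m) →
      ∃ m, classDist (doubleStar p q) (cfun k s hk0) y m ≠
        classDist (doubleStar p q) (cfun k s hk0) x m := by
    rintro x y ⟨m, h⟩; exact ⟨m, h.symm⟩
  rintro ((_|i)|(_|j)) ((_|i')|(_|j')) hxy
  · exact absurd rfl hxy
  · exact diff_center_leaf hk0 hk hs hsq (Or.inl rfl) (Or.inl ⟨i', rfl⟩)
  · exact diff_vu hk0 hk hs hsq hm1 hmp hdisj
  · exact diff_center_leaf hk0 hk hs hsq (Or.inl rfl) (Or.inr ⟨j', rfl⟩)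
  · exact sym (diff_center_leaf hk0 hk hs hsq (Or.inl rfl) (Or.inl ⟨i, rfl⟩))
  · exact diff_aa hk0 hk hs hsq (fun hh => hxy (by rw [hh]))
  · exact sym (diff_center_leaf hk0 hk hs hsq (Or.inr rfl) (Or.inl ⟨i, rfl⟩))
  · exact diff_ab hk0 hk hs hsq hq1 hm1 hmp hdisj i j'
  · exact sym (diff_vu hk0 hk hs hsq hm1 hmp hdisj)
  · exact diff_center_leaf hk0 hk hs hsq (Or.inr rfl) (Or.inl ⟨i', rfl⟩)
  · exact absurd rfl hxy
  · exact diff_center_leaf hk0 hk hs hsq (Or.inr rfl) (Or.inr ⟨j', rfl⟩)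
  · exact sym (diff_center_leaf hk0 hk hs hsq (Or.inl rfl) (Or.inr ⟨j, rfl⟩))
  · exact sym (diff_ab hk0 hk hs hsq hq1 hm1 hmp hdisj i' j)
  · exact sym (diff_center_leaf hk0 hk hs hsq (Or.inr rfl) (Or.inr ⟨j, rfl⟩))
  · exact diff_bb hk0 hk hs hsq (fun hh => hxy (by rw [hh]))

end locating

section final

lemma mem_S {k s m0 : ℕ} (hk0 : 0 < k) (hk : p < k) (hs : 1 ≤ s) (hsq : s + q ≤ k)
    (hq1 : 1 ≤ q) (hm1 : 1 ≤ m0) (hmp : m0 ≤ p) (hdisj : m0 < s ∨ s + q ≤ m0) :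
    ∃ c : Sym2 (VV p q) → Fin k, IsEdgeLocatingColoring (doubleStar p q) c :=
  ⟨cfun k s hk0, cfun_proper hk0 hk hs hsq,
    cfun_locating hk0 hk hs hsq hq1 hm1 hmp (m0 := m0) hdisj⟩

def Xv : Option (Fin p) → VV p q := fun o => o.elim u0 av
def Xu : Option (Fin q) → VV p q := fun o => o.elim v0 bv

lemma Xv_ne_v0 (o : Option (Fin p)) : Xv (q := q) o ≠ v0 := by
  cases o <;> simp [Xv, u0, av, v0]

lemma Xu_ne_u0 (o : Option (Fin q)) : Xu (p := p) o ≠ u0 := by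
  cases o <;> simp [Xu, u0, bv, v0]

lemma Xv_inj : Function.Injective (Xv (p := p) (q := q)) := by
  rintro (_|i) (_|i') h <;> simp_all [Xv, u0, av]

lemma Xu_inj : Function.Injective (Xu (p := p) (q := q)) := by
  rintro (_|j) (_|j') h <;> simp_all [Xu, v0, bv]

lemma adj_v_Xv (o : Option (Fin p)) : (doubleStar p q).Adj v0 (Xv o) := by
  cases o
  · exact adj_vu
  · exact adj_va _

lemma adj_u_Xu (o : Option (Fin q)) : (doubleStar p q).Adj u0 (Xu o) := by
  cases o
  · exact adj_vu.symm
  · exact adj_ub _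

lemma Fv_inj {n : ℕ} (c : Sym2 (VV p q) → Fin n)
    (hprop : ∀ e ∈ (doubleStar p q).edgeSet, ∀ f ∈ (doubleStar p q).edgeSet,
      e ≠ f → (∃ x, x ∈ e ∧ x ∈ f) → c e ≠ c f) :
    Function.Injective (fun o : Option (Fin p) => c s(v0, Xv o)) := by
  intro o o' h
  by_contra hne
  have hXne : Xv (q := q) o ≠ Xv o' := fun hh => hne (Xv_inj hh)
  have hene : s(v0, Xv (q := q) o) ≠ s(v0, Xv o') := fun hh => hXne (Sym2.congr_right.mp hh)
  exact hprop _ ((SimpleGraph.mem_edgeSet _).mpr (adj_v_Xv o))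
    _ ((SimpleGraph.mem_edgeSet _).mpr (adj_v_Xv o')) hene
    ⟨v0, Sym2.mem_mk_left _ _, Sym2.mem_mk_left _ _⟩ h

lemma Fu_inj {n : ℕ} (c : Sym2 (VV p q) → Fin n)
    (hprop : ∀ e ∈ (doubleStar p q).edgeSet, ∀ f ∈ (doubleStar p q).edgeSet,
      e ≠ f → (∃ x, x ∈ e ∧ x ∈ f) → c e ≠ c f) :
    Function.Injective (fun o : Option (Fin q) => c s(u0, Xu o)) := by
  intro o o' h
  by_contra hne
  have hXne : Xu (p := p) o ≠ Xu o' := fun hh => hne (Xu_inj hh)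
  have hene : s(u0, Xu (p := p) o) ≠ s(u0, Xu o') := fun hh => hXne (Sym2.congr_right.mp hh)
  exact hprop _ ((SimpleGraph.mem_edgeSet _).mpr (adj_u_Xu o))
    _ ((SimpleGraph.mem_edgeSet _).mpr (adj_u_Xu o')) hene
    ⟨u0, Sym2.mem_mk_left _ _, Sym2.mem_mk_left _ _⟩ h

lemma lower1 {n : ℕ} (h : ∃ c : Sym2 (VV p q) → Fin n,
    IsEdgeLocatingColoring (doubleStar p q) c) : p + 1 ≤ n := by
  obtain ⟨c, hprop, -⟩ := h
  have := Fintype.card_le_of_injective _ (Fv_inj c hprop)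
  simpa using this

lemma lower2 (hpq : q = p) {n : ℕ} (h : ∃ c : Sym2 (VV p q) → Fin n,
    IsEdgeLocatingColoring (doubleStar p q) c) : p + 2 ≤ n := by
  by_contra hn
  push_neg at hn
  have h1 : p + 1 ≤ n := lower1 h
  obtain ⟨c, hprop, hloc⟩ := h
  have hv := Fv_inj c hprop
  have hu := Fu_inj c hprop
  have hvb : Function.Bijective (fun o : Option (Fin p) => c s(v0, Xv o)) := by
    rw [Fintype.bijective_iff_injective_and_card]
    refine ⟨hv, ?_⟩
    simp; omega
  have hub : Function.Bijective (fun o : Option (Fin q) => c s(u0, Xu o)) := by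
    rw [Fintype.bijective_iff_injective_and_card]
    refine ⟨hu, ?_⟩
    simp; omega
  have hvz : ∀ m : Fin n, classDist (doubleStar p q) c v0 m = 0 := by
    intro m
    obtain ⟨o, ho⟩ := hvb.2 m
    exact classDist_eq_zero_of_mem ((SimpleGraph.mem_edgeSet _).mpr (adj_v_Xv o)) ho
      (Sym2.mem_mk_left _ _)
  have huz : ∀ m : Fin n, classDist (doubleStar p q) c u0 m = 0 := by
    intro m
    obtain ⟨o, ho⟩ := hub.2 m
    exact classDist_eq_zero_of_mem ((SimpleGraph.mem_edgeSet _).mpr (adj_u_Xu o)) ho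
      (Sym2.mem_mk_left _ _)
  obtain ⟨m, hm⟩ := hloc v0 u0 (by simp [v0, u0])
  exact hm (by rw [hvz m, huz m])

end final
end DS


/-- For `p ≥ q ≥ 1` with `p ≥ 2`, `χ'_L(S_{p,q}) = p + 1` if `p > q`, and `p + 2` if `p = q`. -/
theorem stmt_18 (p q : ℕ) (hq : 1 ≤ q) (hqp : q ≤ p) (hp : 2 ≤ p) :
    edgeLocatingChromaticNumber (doubleStar p q) = if p = q then p + 2 else p + 1 := by
  rw [edgeLocatingChromaticNumber]
  split_ifs with hpq
  · have hmem : (p + 2) ∈ {k | ∃ c : Sym2 (DS.VV p q) → Fin k,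
        IsEdgeLocatingColoring (doubleStar p q) c} :=
      DS.mem_S (k := p + 2) (s := 2) (m0 := 1) (by omega) (by omega) (by omega)
        (by omega) hq (by omega) (by omega) (Or.inl (by omega))
    refine le_antisymm (Nat.sInf_le hmem) (le_csInf ⟨_, hmem⟩ ?_)
    exact fun n hn => DS.lower2 hpq.symm hn
  · have hqp' : q < p := lt_of_le_of_ne hqp (fun hh => hpq hh.symm)
    have hmem : (p + 1) ∈ {k | ∃ c : Sym2 (DS.VV p q) → Fin k,
        IsEdgeLocatingColoring (doubleStar p q) c} :=
      DS.mem_S (k := p + 1) (s := 1) (m0 := p) (by omega) (by omega) (by omega)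
        (by omega) hq (by omega) (by omega) (Or.inr (by omega))
    refine le_antisymm (Nat.sInf_le hmem) (le_csInf ⟨_, hmem⟩ ?_)
    exact fun n hn => DS.lower1 hn
end

section
/- Every edge-locating coloring of a finite simple connected graph G is edge distinguishing: if c is an edge-locating coloring of G and f is a graph automorphism of G satisfying c(f(e)) = c(e) for every edge e of G, then f is the identity automorphism. -/
open SimpleGraph

lemma iso_dist_le {V : Type*} {G : SimpleGraph V} (hG : G.Connected) (f : G ≃g G) (u v : V) :
    G.dist (f u) (f v) ≤ G.dist u v := by
  obtain ⟨p, hp⟩ := hG.exists_walk_length_eq_dist u v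
  calc G.dist (f u) (f v) ≤ (p.map f.toHom).length := SimpleGraph.dist_le _
    _ = G.dist u v := by rw [SimpleGraph.Walk.length_map, hp]

lemma iso_dist {V : Type*} {G : SimpleGraph V} (hG : G.Connected) (f : G ≃g G) (u v : V) :
    G.dist (f u) (f v) = G.dist u v := by
  refine le_antisymm (iso_dist_le hG f u v) ?_
  have := iso_dist_le hG f.symm (f u) (f v)
  simpa using this

lemma iso_edgeDist {V : Type*} {G : SimpleGraph V} (hG : G.Connected) (f : G ≃g G) (v : V)
    (e : Sym2 V) : edgeDist G (f v) (Sym2.map (fun x => f x) e) = edgeDist G v e := by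
  induction e using Sym2.ind with
  | _ x y => simp [edgeDist, iso_dist hG f]

lemma iso_mem_edgeSet {V : Type*} {G : SimpleGraph V} (f : G ≃g G) {e : Sym2 V}
    (he : e ∈ G.edgeSet) : Sym2.map (fun x => f x) e ∈ G.edgeSet := by
  induction e using Sym2.ind with
  | _ x y => simpa using f.map_adj_iff.mpr (by simpa using he)

lemma map_map_symm {V : Type*} {G : SimpleGraph V} (f : G ≃g G) (e : Sym2 V) :
    Sym2.map (fun x => f x) (Sym2.map (fun x => f.symm x) e) = e := by
  induction e using Sym2.ind with
  | _ x y => simp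

lemma iso_classDist_le {V : Type*} {G : SimpleGraph V} (hG : G.Connected)
    {k : ℕ} (c : Sym2 V → Fin k)
    (f : G ≃g G) (hf : ∀ e ∈ G.edgeSet, c (Sym2.map (fun v => f v) e) = c e)
    (v : V) (i : Fin k) : classDist G c (f v) i ≤ classDist G c v i := by
  refine le_iInf₂ fun e he => ?_
  have h1 : Sym2.map (fun x => f x) e ∈ G.edgeSet := iso_mem_edgeSet f he.1
  have h2 : c (Sym2.map (fun x => f x) e) = i := by rw [hf e he.1]; exact he.2
  calc classDist G c (f v) i ≤ (edgeDist G (f v) (Sym2.map (fun x => f x) e) : ℕ∞) :=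
        iInf₂_le _ ⟨h1, h2⟩
    _ = (edgeDist G v e : ℕ∞) := by rw [iso_edgeDist hG f]

/-- Every edge-locating coloring of a finite simple connected graph is edge distinguishing:
any automorphism preserving the colors of all edges is the identity. -/
theorem stmt_19 {V : Type*} [Fintype V] (G : SimpleGraph V) (hG : G.Connected)
    {k : ℕ} (c : Sym2 V → Fin k) (hc : IsEdgeLocatingColoring G c)
    (f : G ≃g G) (hf : ∀ e ∈ G.edgeSet, c (Sym2.map (fun v => f v) e) = c e) :
    ∀ v : V, f v = v := by
  have hf' : ∀ e ∈ G.edgeSet, c (Sym2.map (fun v => f.symm v) e) = c e := by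
    intro e he
    have h1 : Sym2.map (fun x => f.symm x) e ∈ G.edgeSet := iso_mem_edgeSet f.symm he
    have := hf _ h1
    rw [map_map_symm f e] at this; exact this.symm
  intro v
  by_contra h
  obtain ⟨i, hi⟩ := hc.2 (f v) v h
  apply hi
  refine le_antisymm (iso_classDist_le hG c f hf v i) ?_
  have := iso_classDist_le hG c f.symm hf' (f v) i
  simpa using this
end
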